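/- arXiv:1006.1541 — 7 statements merged into one kernel-verified Lean document; each statement's English description precedes it below -/
import Mathlib

section
/- Let ξ_1, …, ξ_n be nonnegative, independent real random variables, let q ≥ 1 and u > 0. Then P(‖(ξ_1, …, ξ_n)‖_{q,∞} > u) ≤ (2e / u^q) Δ(ξ_1, …, ξ_n), where Δ(ξ_1, …, ξ_n) := sup_{t > 0} ( t^q ∑_{k=1}^n P(ξ_k > t) ). -/
open MeasureTheory ProbabilityTheory Finset

/-- The weak-`ℓ_q` norm of a finite sequence of reals. -/
noncomputable def weakLpNorm (q : ℝ) {n : ℕ} (a : Fin n → ℝ) : ℝ :=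
  ⨆ t : {t : ℝ // 0 < t},
    ((t : ℝ) ^ q * ((Finset.univ.filter fun i => (t : ℝ) < |a i|).card : ℝ)) ^ (1 / q)

/-- `Δ(ξ_1,…,ξ_n) = sup_{t>0} t^q ∑_k P(ξ_k > t)`, computed in `ℝ≥0∞`. -/
noncomputable def weakMomentSup {Ω : Type*} [MeasurableSpace Ω] (μ : Measure Ω) (q : ℝ)
    {n : ℕ} (ξ : Fin n → Ω → ℝ) : ENNReal :=
  ⨆ t : {t : ℝ // 0 < t}, ENNReal.ofReal ((t : ℝ) ^ q) * ∑ k, μ {ω | (t : ℝ) < ξ k ω}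

/-!
If `‖ξ‖_{q,∞} > u`, then for some `m ≥ 1` at least `m` of the `ξ_i` exceed `t_m = u m^{-1/q}`.
By a union bound over `m`-subsets and independence this has probability at most
`e_m(p) ≤ (∑ p_i)^m / m!`, where `p_i = P(ξ_i > t_m)`. Since `t_m^q ∑ p_i ≤ Δ` and
`m^m ≤ e^m m!`, this is at most `r^m` with `r = eΔ/u^q`. Summing over `m` gives `2r` when
`r ≤ 1/2`, and otherwise `2r ≥ 1` bounds any probability.
-/

open scoped Nat ENNReal

theorem factorial_mul_sum_powersetCard_prod_le_pow {ι R : Type*} [Fintype ι] [CommSemiring R]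
    [Preorder R] [CanonicallyOrderedAdd R] (p : ι → R) (m : ℕ) :
    m ! * ∑ s ∈ powersetCard m univ, ∏ i ∈ s, p i ≤ (∑ i, p i) ^ m := by
  classical
  set χ : Finset ι → ι → ℕ := fun s i => if i ∈ s then 1 else 0
  have hχ_sum (s : Finset ι) : ∑ i, χ s i = #s := by simp [χ]
  have hχ_inj : Set.InjOn χ (powersetCard m (univ : Finset ι)) := by
    intro s _ t _ hst
    ext i
    have := congrFun hst i
    by_cases i ∈ s <;> by_cases i ∈ t <;> simp_all [χ]
  have hχ_mem : ∀ s ∈ powersetCard m univ, χ s ∈ piAntidiag univ m := by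
    intro s hs
    simp [hχ_sum, (mem_powersetCard.1 hs).2]
  -- The `m`-subsets are the monomials of `(∑ p)^m` with exponents `0` and `1`.
  have hχ_term : ∀ s ∈ powersetCard m univ,
      Nat.multinomial univ (χ s) * ∏ i, p i ^ χ s i = m ! * ∏ i ∈ s, p i := by
    intro s hs
    have hfact : ∏ i, (χ s i)! = 1 := prod_eq_one fun i _ => by by_cases i ∈ s <;> simp [χ, *]
    have hmult := Nat.multinomial_spec univ (χ s)
    rw [hfact, one_mul, hχ_sum, (mem_powersetCard.1 hs).2] at hmult
    simp [χ, hmult, pow_ite, prod_ite_mem]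
  rw [sum_pow_eq_sum_piAntidiag, mul_sum, ← sum_congr rfl hχ_term,
    ← sum_image (f := fun k => (Nat.multinomial univ k : R) * ∏ i, p i ^ k i) hχ_inj]
  exact sum_le_sum_of_subset fun k hk => by
    obtain ⟨s, hs, rfl⟩ := mem_image.1 hk
    exact hχ_mem s hs

theorem natCast_pow_self_le_factorial_mul_exp_pow (m : ℕ) :
    (m : ℝ≥0∞) ^ m ≤ m ! * ENNReal.ofReal (Real.exp 1) ^ m := by
  have h := Real.pow_div_factorial_le_exp (m : ℝ) m.cast_nonneg m
  rw [div_le_iff₀ (by positivity), ← Real.exp_one_pow, mul_comm] at h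
  rw [← ENNReal.ofReal_pow (Real.exp_pos 1).le, ← ENNReal.ofReal_natCast, ← ENNReal.ofReal_pow
    m.cast_nonneg, ← ENNReal.ofReal_natCast, ← ENNReal.ofReal_mul (by positivity)]
  exact ENNReal.ofReal_le_ofReal h

theorem ProbabilityTheory.iIndepFun.measure_le_card_filter_lt_le {Ω ι : Type*}
    [MeasurableSpace Ω] [Fintype ι] {μ : Measure Ω} {ξ : ι → Ω → ℝ} (hξ : iIndepFun ξ μ)
    (t : ℝ) (m : ℕ) :
    μ {ω | m ≤ #{i | t < ξ i ω}} ≤ ∑ s ∈ powersetCard m univ, ∏ i ∈ s, μ {ω | t < ξ i ω} := by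
  classical
  have hcover : {ω | m ≤ #{i | t < ξ i ω}}
      ⊆ ⋃ s ∈ powersetCard m univ, ⋂ i ∈ s, {ω | t < ξ i ω} := by
    intro ω hω
    obtain ⟨s, hs, hcard⟩ := exists_subset_card_eq hω
    exact Set.mem_biUnion (mem_powersetCard.2 ⟨subset_univ s, hcard⟩)
      (Set.mem_biInter fun i hi => (mem_filter.1 (hs hi)).2)
  calc μ {ω | m ≤ #{i | t < ξ i ω}}
      ≤ ∑ s ∈ powersetCard m univ, μ (⋂ i ∈ s, {ω | t < ξ i ω}) :=
        (measure_mono hcover).trans (measure_biUnion_finset_le _ _)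
    _ = ∑ s ∈ powersetCard m univ, ∏ i ∈ s, μ {ω | t < ξ i ω} :=
        sum_congr rfl fun s _ => hξ.meas_biInter fun i _ => ⟨Set.Ioi t, measurableSet_Ioi, rfl⟩

theorem exists_le_card_filter_of_lt_weakLpNorm {n : ℕ} {a : Fin n → ℝ} {q u : ℝ} (hq : 0 < q)
    (hu : 0 ≤ u) (h : u < weakLpNorm q a) :
    ∃ m : ℕ, 0 < m ∧ m ≤ #{i | u / (m : ℝ) ^ (1 / q) < |a i|} := by
  have : Nonempty {t : ℝ // 0 < t} := ⟨⟨1, one_pos⟩⟩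
  obtain ⟨⟨t, ht⟩, hlt⟩ := exists_lt_of_lt_ciSup h
  set N := #{i | t < |a i|}
  rw [Real.mul_rpow (by positivity) N.cast_nonneg, ← Real.rpow_mul ht.le,
    mul_one_div_cancel hq.ne', Real.rpow_one] at hlt
  have hN : 0 < N := by
    by_contra! hN
    rw [Nat.le_zero.1 hN, Nat.cast_zero, Real.zero_rpow (one_div_pos.2 hq).ne', mul_zero] at hlt
    exact hlt.not_ge hu
  have hthreshold : u / (N : ℝ) ^ (1 / q) < t := by
    rwa [div_lt_iff₀ (by positivity)]
  exact ⟨N, hN, card_le_card <| monotone_filter_right _ fun _ _ => hthreshold.trans⟩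

theorem measure_le_card_filter_lt_le_pow {Ω : Type*} [MeasurableSpace Ω] {μ : Measure Ω}
    {n : ℕ} {ξ : Fin n → Ω → ℝ} (hξ : iIndepFun ξ μ) {q u : ℝ} (hq : 0 < q) (hu : 0 < u)
    {m : ℕ} (hm : 0 < m) :
    μ {ω | m ≤ #{i | u / (m : ℝ) ^ (1 / q) < ξ i ω}}
      ≤ (ENNReal.ofReal (Real.exp 1 / u ^ q) * weakMomentSup μ q ξ) ^ m := by
  set Δ := weakMomentSup μ q ξ
  set t := u / (m : ℝ) ^ (1 / q)
  set S := ∑ i, μ {ω | t < ξ i ω}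
  have ht : 0 < t := by positivity
  have htq : (t ^ q)⁻¹ = m * (u ^ q)⁻¹ := by
    rw [Real.div_rpow hu.le (by positivity), ← Real.rpow_mul m.cast_nonneg,
      one_div_mul_cancel hq.ne', Real.rpow_one, inv_div, div_eq_mul_inv]
  have hS : S ≤ m * (ENNReal.ofReal ((u ^ q)⁻¹) * Δ) := by
    have hΔ : ENNReal.ofReal (t ^ q) * S ≤ Δ :=
      le_iSup (fun s : {s : ℝ // 0 < s} =>
        ENNReal.ofReal ((s : ℝ) ^ q) * ∑ k, μ {ω | (s : ℝ) < ξ k ω}) ⟨t, ht⟩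
    calc S ≤ (ENNReal.ofReal (t ^ q))⁻¹ * Δ :=
          (ENNReal.mul_le_iff_le_inv (by positivity) ENNReal.ofReal_ne_top).1 hΔ
      _ = m * (ENNReal.ofReal ((u ^ q)⁻¹) * Δ) := by
          rw [← ENNReal.ofReal_inv_of_pos (by positivity), htq,
            ENNReal.ofReal_mul m.cast_nonneg, ENNReal.ofReal_natCast, mul_assoc]
  have hfactorial :
      m ! * μ {ω | m ≤ #{i | t < ξ i ω}} ≤ m ! * (ENNReal.ofReal (Real.exp 1 / u ^ q) * Δ) ^ m :=
    calc m ! * μ {ω | m ≤ #{i | t < ξ i ω}}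
        ≤ m ! * ∑ s ∈ powersetCard m univ, ∏ i ∈ s, μ {ω | t < ξ i ω} := by
          gcongr; exact hξ.measure_le_card_filter_lt_le t m
      _ ≤ S ^ m := factorial_mul_sum_powersetCard_prod_le_pow _ m
      _ ≤ (m : ℝ≥0∞) ^ m * (ENNReal.ofReal ((u ^ q)⁻¹) * Δ) ^ m := by
          rw [← mul_pow]; gcongr
      _ ≤ m ! * ENNReal.ofReal (Real.exp 1) ^ m * (ENNReal.ofReal ((u ^ q)⁻¹) * Δ) ^ m := by
          gcongr; exact natCast_pow_self_le_factorial_mul_exp_pow m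
      _ = m ! * (ENNReal.ofReal (Real.exp 1 / u ^ q) * Δ) ^ m := by
          rw [div_eq_mul_inv, ENNReal.ofReal_mul (Real.exp_pos 1).le, mul_assoc, ← mul_pow,
            mul_assoc]
  exact (ENNReal.mul_le_mul_iff_right (by positivity) (ENNReal.natCast_ne_top _)).1 hfactorial

theorem ENNReal.tsum_pow_succ_le_two_mul {r : ℝ≥0∞} (hr : r ≤ 2⁻¹) :
    ∑' m : ℕ, r ^ (m + 1) ≤ 2 * r := by
  simp_rw [pow_succ', ENNReal.tsum_mul_left, ENNReal.tsum_geometric]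
  rw [mul_comm 2]
  gcongr
  rw [ENNReal.inv_le_iff_inv_le]
  refine ENNReal.le_sub_of_add_le_left (ne_top_of_le_ne_top (by simp) hr) ?_
  calc r + 2⁻¹ ≤ 2⁻¹ + 2⁻¹ := by gcongr
    _ = 1 := ENNReal.inv_two_add_inv_two

theorem weakLpNorm_tail_bound_general
    {Ω : Type*} [MeasurableSpace Ω] (μ : Measure Ω) [IsProbabilityMeasure μ]
    {n : ℕ} (ξ : Fin n → Ω → ℝ)
    (hnonneg : ∀ k ω, 0 ≤ ξ k ω)
    (hindep : iIndepFun ξ μ)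
    (q : ℝ) (hq : 1 ≤ q) (u : ℝ) (hu : 0 < u) :
    μ {ω | u < weakLpNorm q fun k => ξ k ω}
      ≤ ENNReal.ofReal (2 * Real.exp 1 / u ^ q) * weakMomentSup μ q ξ := by
  have hq0 : 0 < q := by linarith
  set r := ENNReal.ofReal (Real.exp 1 / u ^ q) * weakMomentSup μ q ξ
  have hRHS : ENNReal.ofReal (2 * Real.exp 1 / u ^ q) * weakMomentSup μ q ξ = 2 * r := by
    rw [mul_div_assoc, ENNReal.ofReal_mul zero_le_two, ENNReal.ofReal_ofNat, mul_assoc]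
  rw [hRHS]
  rcases le_or_gt 2⁻¹ r with hr | hr
  · refine prob_le_one.trans ?_
    calc 1 = 2 * 2⁻¹ := (ENNReal.mul_inv_cancel two_ne_zero ENNReal.ofNat_ne_top).symm
      _ ≤ 2 * r := by gcongr
  have hcover : {ω | u < weakLpNorm q fun k => ξ k ω}
      ⊆ ⋃ m : ℕ, {ω | m + 1 ≤ #{i | u / ((m + 1 : ℕ) : ℝ) ^ (1 / q) < ξ i ω}} := by
    intro ω hω
    obtain ⟨m, hm, hcard⟩ := exists_le_card_filter_of_lt_weakLpNorm hq0 hu.le hω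
    simp only [abs_of_nonneg (hnonneg _ ω)] at hcard
    exact Set.mem_iUnion.2 ⟨m - 1, by rwa [Nat.sub_add_cancel hm]⟩
  calc μ {ω | u < weakLpNorm q fun k => ξ k ω}
      ≤ ∑' m : ℕ, μ {ω | m + 1 ≤ #{i | u / ((m + 1 : ℕ) : ℝ) ^ (1 / q) < ξ i ω}} :=
        (measure_mono hcover).trans (measure_iUnion_le _)
    _ ≤ ∑' m : ℕ, r ^ (m + 1) :=
        ENNReal.tsum_le_tsum fun m => measure_le_card_filter_lt_le_pow hindep hq0 hu m.succ_pos
    _ ≤ 2 * r := ENNReal.tsum_pow_succ_le_two_mul hr.le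

/-- Marcus–Pisier. For nonnegative independent real random variables
`ξ_1,…,ξ_n`, `q ≥ 1` and `u > 0`,
`P(‖(ξ_1,…,ξ_n)‖_{q,∞} > u) ≤ (2e/u^q) Δ(ξ_1,…,ξ_n)`. -/
theorem weakLpNorm_tail_bound
    {Ω : Type*} [MeasurableSpace Ω] (μ : Measure Ω) [IsProbabilityMeasure μ]
    {n : ℕ} (ξ : Fin n → Ω → ℝ)
    (hnonneg : ∀ k ω, 0 ≤ ξ k ω)
    (hmeas : ∀ k, Measurable (ξ k))
    (hindep : iIndepFun ξ μ)
    (q : ℝ) (hq : 1 ≤ q) (u : ℝ) (hu : 0 < u) :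
    μ {ω | u < weakLpNorm q fun k => ξ k ω}
      ≤ ENNReal.ofReal (2 * Real.exp 1 / u ^ q) * weakMomentSup μ q ξ :=
  weakLpNorm_tail_bound_general μ ξ hnonneg hindep q hq u hu
end

section
/- Let q > 1 and let ξ_1, …, ξ_n be nonnegative, independent real random variables with Δ := sup_{t > 0} ( t^q ∑_{k=1}^n P(ξ_k > t) ) < ∞. Then E‖(ξ_1, …, ξ_n)‖_{q,∞} ≤ (1 + 2e/(q−1)) Δ^{1/q}. In particular there is a constant c depending only on q with E‖(ξ_1, …, ξ_n)‖_{q,∞} ≤ c Δ^{1/q}. -/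
open MeasureTheory ProbabilityTheory Finset

open scoped ENNReal Nat

/-!
If `‖ξ‖_{q,∞} > u`, then some `t` has `t^q · #{k : ξ_k > t} > u^q`; with `m := #{k : ξ_k > t}`
this says that at least `m` of the `ξ_k` exceed `u / m^{1/q}`. By independence and a union bound
over `m`-element subsets, this has probability at most `(∑_k p_k)^m / m!`, where
`p_k = P(ξ_k > u / m^{1/q})` and `∑_k p_k ≤ m Δ / u^q`; since `m^m / m! ≤ e^m` this is at most
`(eΔ/u^q)^m`. Summing over `m` gives `P(‖ξ‖_{q,∞} > u) ≤ 2eΔ/u^q` (trivial when `eΔ/u^q > 1/2`),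
and the layer-cake formula, using the bound `1` for `u ≤ Δ^{1/q}`, gives the estimate.
-/

namespace Finset

variable {ι R : Type*}

theorem sum_powersetCard_succ_insert [DecidableEq ι] [AddCommMonoid R] {a : ι} {s : Finset ι}
    (ha : a ∉ s) (m : ℕ) (f : Finset ι → R) :
    ∑ t ∈ (insert a s).powersetCard (m + 1), f t =
      ∑ t ∈ s.powersetCard (m + 1), f t + ∑ t ∈ s.powersetCard m, f (insert a t) := by
  rw [powersetCard_succ_insert ha, sum_union, sum_image]
  · exact insert_erase_invOn.2.injOn.mono fun t ht ↦ notMem_mono (mem_powersetCard.1 ht).1 ha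
  · aesop (add simp [disjoint_left, insert_subset_iff, mem_powersetCard])

theorem factorial_mul_sum_powersetCard_prod_le_pow_sum [CommSemiring R] [LinearOrder R]
    [IsOrderedRing R] [ExistsAddOfLE R] (s : Finset ι) {p : ι → R} (hp : ∀ i ∈ s, 0 ≤ p i)
    (m : ℕ) : (m ! : R) * ∑ t ∈ s.powersetCard m, ∏ i ∈ t, p i ≤ (∑ i ∈ s, p i) ^ m := by
  classical
  induction s using Finset.induction_on generalizing m with
  | empty =>
    cases m with
    | zero => simp
    | succ j => simp [powersetCard_eq_empty.2 (by simp : (∅ : Finset ι).card < j + 1)]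
  | @insert a s ha ih =>
    cases m with
    | zero => simp
    | succ j =>
      have hpa : 0 ≤ p a := hp a (mem_insert_self a s)
      have hps : ∀ i ∈ s, 0 ≤ p i := fun i hi ↦ hp i (mem_insert_of_mem hi)
      have hT : 0 ≤ ∑ i ∈ s, p i := sum_nonneg hps
      have hprod : ∀ t ∈ s.powersetCard j, ∏ i ∈ insert a t, p i = p a * ∏ i ∈ t, p i :=
        fun t ht ↦ prod_insert (notMem_mono (mem_powersetCard.1 ht).1 ha)
      rw [sum_powersetCard_succ_insert ha, sum_congr rfl hprod, ← mul_sum, sum_insert ha,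
        add_comm (p a)]
      calc ((j + 1)! : R) * (∑ t ∈ s.powersetCard (j + 1), ∏ i ∈ t, p i
              + p a * ∑ t ∈ s.powersetCard j, ∏ i ∈ t, p i)
          = ((j + 1)! : R) * ∑ t ∈ s.powersetCard (j + 1), ∏ i ∈ t, p i
              + ((j + 1 : ℕ) : R) * p a * ((j ! : R) * ∑ t ∈ s.powersetCard j, ∏ i ∈ t, p i) := by
            push_cast [Nat.factorial_succ]; ring
        _ ≤ (∑ i ∈ s, p i) ^ (j + 1) + ((j + 1 : ℕ) : R) * p a * (∑ i ∈ s, p i) ^ j := by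
            gcongr
            exacts [ih hps _, ih hps _]
        _ = (∑ i ∈ s, p i) ^ (j + 1) + ((j + 1 : ℕ) : R) * (∑ i ∈ s, p i) ^ (j + 1 - 1) * p a := by
            rw [Nat.add_sub_cancel]; ring
        _ ≤ (∑ i ∈ s, p i + p a) ^ (j + 1) :=
            pow_add_mul_le_add_pow hT (add_nonneg (mul_nonneg zero_le_two hT) hpa) _

end Finset

theorem mul_pow_div_factorial_le_exp_one_mul_pow {x : ℝ} (hx : 0 ≤ x) (m : ℕ) :
    (x * m) ^ m / m ! ≤ (Real.exp 1 * x) ^ m := by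
  rw [mul_pow, mul_div_assoc, mul_pow, mul_comm, ← Real.exp_nat_mul, mul_one]
  gcongr
  exact Real.pow_div_factorial_le_exp _ m.cast_nonneg m

theorem sum_Icc_one_pow_le_two_mul {r : ℝ} (hr : 0 ≤ r) (hr' : r ≤ 1 / 2) (n : ℕ) :
    ∑ m ∈ Icc 1 n, r ^ m ≤ 2 * r := by
  calc ∑ m ∈ Icc 1 n, r ^ m = ∑ m ∈ Ico 1 (n + 1), r ^ m := by rw [Ico_add_one_right_eq_Icc]
    _ ≤ r ^ 1 / (1 - r) := geom_sum_Ico_le_of_lt_one hr (by linarith)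
    _ ≤ 2 * r := by rw [pow_one, div_le_iff₀ (by linarith)]; nlinarith

theorem setLIntegral_Ioi_le_of_le_one_of_le_div_rpow {f : ℝ → ℝ≥0∞} {c D q : ℝ} (hq : 1 < q)
    (hc : 0 ≤ c) (hD : 0 ≤ D) (h1 : ∀ u, f u ≤ 1)
    (h2 : ∀ u > 0, f u ≤ ENNReal.ofReal (c * D / u ^ q)) :
    ∫⁻ u in Set.Ioi 0, f u ≤ ENNReal.ofReal ((1 + c / (q - 1)) * D ^ (1 / q)) := by
  rcases hD.eq_or_lt with rfl | hD
  · calc ∫⁻ u in Set.Ioi 0, f u ≤ ∫⁻ _ in Set.Ioi 0, 0 :=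
          setLIntegral_mono measurable_const fun u hu ↦ by simpa using h2 u hu
      _ ≤ _ := by rw [lintegral_zero]; exact zero_le
  set a := D ^ (1 / q)
  have ha : 0 < a := by positivity
  have hDa : D = a ^ q := by
    change D = (D ^ (1 / q)) ^ q
    rw [one_div, Real.rpow_inv_rpow hD.le (by positivity)]
  have htail : ∫⁻ u in Set.Ioi a, ENNReal.ofReal (c * D * u ^ (-q)) =
      ENNReal.ofReal (c / (q - 1) * a) := by
    rw [← ofReal_integral_eq_lintegral_ofReal
      ((integrableOn_Ioi_rpow_of_lt (by linarith) ha).const_mul _)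
      ((ae_restrict_iff' measurableSet_Ioi).2 (ae_of_all _ fun u hu ↦
        mul_nonneg (by positivity) (Real.rpow_nonneg (ha.trans hu).le _))),
      integral_const_mul, integral_Ioi_rpow_of_lt (by linarith) ha]
    congr 1
    rw [hDa, neg_add_eq_sub, Real.rpow_sub ha, Real.rpow_one, show 1 - q = -(q - 1) by ring,
      div_neg, neg_div, neg_neg]
    field_simp
  calc ∫⁻ u in Set.Ioi 0, f u = (∫⁻ u in Set.Ioc 0 a, f u) + ∫⁻ u in Set.Ioi a, f u := by
        rw [← lintegral_union measurableSet_Ioi Set.Ioc_disjoint_Ioi_same,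
          Set.Ioc_union_Ioi_eq_Ioi ha.le]
    _ ≤ (∫⁻ _ in Set.Ioc 0 a, 1) + ∫⁻ u in Set.Ioi a, ENNReal.ofReal (c * D * u ^ (-q)) := by
        refine add_le_add (lintegral_mono h1) (setLIntegral_mono
          ((measurable_id.pow_const _).const_mul _).ennreal_ofReal fun u hu ↦ ?_)
        have hu : 0 < u := ha.trans hu
        rw [Real.rpow_neg hu.le, ← div_eq_mul_inv]
        exact h2 u hu
    _ = ENNReal.ofReal ((1 + c / (q - 1)) * a) := by
        rw [setLIntegral_const, Real.volume_Ioc, one_mul, sub_zero, htail,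
          ← ENNReal.ofReal_add ha.le (by positivity)]
        ring_nf

section Independence

variable {Ω ι : Type*} [MeasurableSpace Ω] {μ : Measure Ω} [IsFiniteMeasure μ] [Fintype ι]

theorem measureReal_le_card_lt_le {X : ι → Ω → ℝ} (hX : iIndepFun X μ) (t : ℝ) (m : ℕ) :
    μ.real {ω | m ≤ #{i | t < X i ω}} ≤ (∑ i, μ.real {ω | t < X i ω}) ^ m / m ! := by
  classical
  have hsub : {ω | m ≤ #{i | t < X i ω}} ⊆
      ⋃ S ∈ (univ : Finset ι).powersetCard m, ⋂ i ∈ S, X i ⁻¹' Set.Ioi t := by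
    intro ω hω
    obtain ⟨S, hS, hcard⟩ := exists_subset_card_eq hω
    simp only [Set.mem_iUnion, Set.mem_iInter]
    exact ⟨S, mem_powersetCard.2 ⟨subset_univ S, hcard⟩, fun i hi ↦ (mem_filter.1 (hS hi)).2⟩
  have hprod : ∀ S : Finset ι,
      μ.real (⋂ i ∈ S, X i ⁻¹' Set.Ioi t) = ∏ i ∈ S, μ.real {ω | t < X i ω} := fun S ↦ by
    simp only [measureReal_def, ← ENNReal.toReal_prod]
    rw [hX.measure_inter_preimage_eq_mul S fun _ _ ↦ measurableSet_Ioi]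
    rfl
  rw [le_div_iff₀ (by positivity), mul_comm]
  calc (m ! : ℝ) * μ.real {ω | m ≤ #{i | t < X i ω}}
      ≤ m ! * ∑ S ∈ (univ : Finset ι).powersetCard m, μ.real (⋂ i ∈ S, X i ⁻¹' Set.Ioi t) := by
        gcongr
        exact (measureReal_mono hsub (measure_ne_top _ _)).trans
          (measureReal_biUnion_finset_le _ _)
    _ ≤ (∑ i, μ.real {ω | t < X i ω}) ^ m := by
        simp only [hprod]
        exact factorial_mul_sum_powersetCard_prod_le_pow_sum _ (fun _ _ ↦ measureReal_nonneg) m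

end Independence

section WeakLpNorm

variable {n : ℕ} {q : ℝ}

theorem weakLpNorm_nonneg (a : Fin n → ℝ) : 0 ≤ weakLpNorm q a :=
  Real.iSup_nonneg fun t ↦ Real.rpow_nonneg (by have := t.2; positivity) _

theorem rpow_mul_card_lt_abs_le_sum (hq : 0 ≤ q) (a : Fin n → ℝ) {t : ℝ} (ht : 0 < t) :
    t ^ q * #{i | t < |a i|} ≤ ∑ i, |a i| ^ q := by
  rw [mul_comm, ← nsmul_eq_mul]
  calc #{i | t < |a i|} • t ^ q ≤ ∑ i ∈ {i | t < |a i|}, |a i| ^ q :=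
        card_nsmul_le_sum _ _ _ fun i hi ↦
          Real.rpow_le_rpow ht.le (mem_filter.1 hi).2.le hq
    _ ≤ ∑ i, |a i| ^ q :=
        sum_le_sum_of_subset_of_nonneg (subset_univ _) fun i _ _ ↦ by positivity

theorem lowerSemicontinuous_card_lt_abs (t : ℝ) :
    LowerSemicontinuous fun a : Fin n → ℝ ↦ #{i | t < |a i|} := by
  have hsum : (fun a : Fin n → ℝ ↦ #{i | t < |a i|}) =
      fun a ↦ ∑ i, {a : Fin n → ℝ | t < |a i|}.indicator 1 a := by
    ext a
    rw [card_filter]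
    simp only [Set.indicator_apply, Set.mem_ofPred_eq, Pi.one_apply]
  rw [hsum]
  exact lowerSemicontinuous_sum fun i _ ↦
    (isOpen_lt continuous_const (continuous_apply i).abs).lowerSemicontinuous_indicator zero_le_one

theorem lowerSemicontinuous_weakLpNorm (hq : 0 < q) :
    LowerSemicontinuous (weakLpNorm q : (Fin n → ℝ) → ℝ) := by
  refine lowerSemicontinuous_ciSup (fun a ↦ ⟨(∑ i, |a i| ^ q) ^ (1 / q), ?_⟩) fun t ↦ ?_
  · rintro _ ⟨t, rfl⟩
    exact Real.rpow_le_rpow (by have := t.2; positivity)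
      (rpow_mul_card_lt_abs_le_sum hq.le a t.2) (by positivity)
  · have hmono : Monotone fun k : ℕ ↦ ((t : ℝ) ^ q * k) ^ (1 / q) := fun k l hkl ↦
      Real.rpow_le_rpow (by have := t.2; positivity)
        (by have := t.2; gcongr) (by positivity)
    exact continuous_of_discreteTopology.comp_lowerSemicontinuous
      (lowerSemicontinuous_card_lt_abs t) hmono

theorem measurable_weakLpNorm (hq : 0 < q) : Measurable (weakLpNorm q : (Fin n → ℝ) → ℝ) :=
  (lowerSemicontinuous_weakLpNorm hq).measurable

theorem exists_le_card_lt_abs_of_lt_weakLpNorm (hq : 0 < q) {a : Fin n → ℝ} {u : ℝ}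
    (hu : 0 < u) (h : u < weakLpNorm q a) :
    ∃ m ∈ Icc 1 n, m ≤ #{i | u / (m : ℝ) ^ (1 / q) < |a i|} := by
  obtain ⟨⟨t, ht⟩, hlt⟩ := exists_lt_of_lt_ciSup h
  set c := #{i | t < |a i|}
  have hsplit : (t ^ q * c) ^ (1 / q) = t * (c : ℝ) ^ (1 / q) := by
    rw [Real.mul_rpow (by positivity) (by positivity), one_div, Real.rpow_rpow_inv ht.le hq.ne']
  change u < (t ^ q * c) ^ (1 / q) at hlt
  rw [hsplit] at hlt
  have hc : c ≠ 0 := by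
    rintro hc
    rw [hc, Nat.cast_zero, Real.zero_rpow (by positivity), mul_zero] at hlt
    exact hu.not_gt hlt
  have hut : u / (c : ℝ) ^ (1 / q) < t := by
    rwa [div_lt_iff₀ (by positivity)]
  have hcn : c ≤ n := (card_le_univ _).trans_eq (Fintype.card_fin n)
  refine ⟨c, mem_Icc.2 ⟨Nat.one_le_iff_ne_zero.2 hc, hcn⟩, ?_⟩
  exact card_le_card (monotone_filter_right _ fun i _ hi ↦ hut.trans hi)

theorem setOf_lt_weakLpNorm_subset {Ω : Type*} {ξ : Fin n → Ω → ℝ} (hq : 0 < q)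
    (hξ : ∀ k ω, 0 ≤ ξ k ω) {u : ℝ} (hu : 0 < u) :
    {ω | u < weakLpNorm q fun k ↦ ξ k ω} ⊆
      ⋃ m ∈ Icc 1 n, {ω | m ≤ #{i | u / (m : ℝ) ^ (1 / q) < ξ i ω}} := by
  intro ω hω
  obtain ⟨m, hm, hcard⟩ := exists_le_card_lt_abs_of_lt_weakLpNorm hq hu hω
  simp only [abs_of_nonneg (hξ _ ω)] at hcard
  exact Set.mem_biUnion hm hcard

end WeakLpNorm

section TailBound

variable {Ω : Type*} [MeasurableSpace Ω] {μ : Measure Ω} {n : ℕ} {ξ : Fin n → Ω → ℝ} {q : ℝ}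

theorem rpow_mul_sum_measureReal_le_weakMomentSup [IsFiniteMeasure μ]
    (hΔ : weakMomentSup μ q ξ ≠ ⊤) {t : ℝ} (ht : 0 < t) :
    t ^ q * ∑ k, μ.real {ω | t < ξ k ω} ≤ (weakMomentSup μ q ξ).toReal := by
  have h := ENNReal.toReal_mono hΔ <| le_iSup (fun s : {t : ℝ // 0 < t} ↦
    ENNReal.ofReal ((s : ℝ) ^ q) * ∑ k, μ {ω | (s : ℝ) < ξ k ω}) ⟨t, ht⟩
  rwa [ENNReal.toReal_mul, ENNReal.toReal_ofReal (by positivity),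
    ENNReal.toReal_sum fun _ _ ↦ measure_ne_top μ _] at h

theorem measureReal_lt_weakLpNorm_le [IsProbabilityMeasure μ] (hξ : ∀ k ω, 0 ≤ ξ k ω)
    (hindep : iIndepFun ξ μ) (hq : 0 < q) {D : ℝ}
    (hD : ∀ t > 0, t ^ q * ∑ k, μ.real {ω | t < ξ k ω} ≤ D) {u : ℝ} (hu : 0 < u) :
    μ.real {ω | u < weakLpNorm q fun k ↦ ξ k ω} ≤ 2 * Real.exp 1 * D / u ^ q := by
  have huq : 0 < u ^ q := by positivity
  have hD0 : 0 ≤ D :=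
    (mul_nonneg (by positivity) (sum_nonneg fun _ _ ↦ measureReal_nonneg)).trans (hD 1 one_pos)
  set r := Real.exp 1 * (D / u ^ q)
  have h2r : 2 * r = 2 * Real.exp 1 * D / u ^ q := by ring
  rcases lt_or_ge (1 / 2) r with hr | hr
  · exact measureReal_le_one.trans (by linarith)
  have hlevel : ∀ m ∈ Icc 1 n,
      μ.real {ω | m ≤ #{i | u / (m : ℝ) ^ (1 / q) < ξ i ω}} ≤ r ^ m := by
    intro m hm
    have hm0 : (0 : ℝ) < m := by have := (mem_Icc.1 hm).1; positivity
    have hsum : ∑ i, μ.real {ω | u / (m : ℝ) ^ (1 / q) < ξ i ω} ≤ D / u ^ q * m := by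
      have h := hD _ (by positivity : 0 < u / (m : ℝ) ^ (1 / q))
      have hmq : ((m : ℝ) ^ (1 / q)) ^ q = m := by
        rw [one_div, Real.rpow_inv_rpow hm0.le hq.ne']
      rw [Real.div_rpow hu.le (by positivity), hmq, div_mul_eq_mul_div, div_le_iff₀ hm0] at h
      rw [div_mul_eq_mul_div, le_div_iff₀ huq]
      linarith
    calc _ ≤ (∑ i, μ.real {ω | u / (m : ℝ) ^ (1 / q) < ξ i ω}) ^ m / m ! :=
          measureReal_le_card_lt_le hindep _ m
      _ ≤ (D / u ^ q * m) ^ m / m ! := by gcongr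
      _ ≤ r ^ m := mul_pow_div_factorial_le_exp_one_mul_pow (by positivity) m
  calc _ ≤ ∑ m ∈ Icc 1 n, μ.real {ω | m ≤ #{i | u / (m : ℝ) ^ (1 / q) < ξ i ω}} :=
        (measureReal_mono (setOf_lt_weakLpNorm_subset hq hξ hu) (measure_ne_top _ _)).trans
          (measureReal_biUnion_finset_le _ _)
    _ ≤ ∑ m ∈ Icc 1 n, r ^ m := sum_le_sum hlevel
    _ ≤ 2 * r := sum_Icc_one_pow_le_two_mul (by positivity) hr n
    _ = _ := h2r

end TailBound

/-- For `q > 1` and nonnegative independent real random variables with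
`Δ = sup_{t>0} t^q ∑_k P(ξ_k > t) < ∞`, one has
`E‖(ξ_1,…,ξ_n)‖_{q,∞} ≤ (1 + 2e/(q−1)) Δ^{1/q}`. -/
theorem weakLpNorm_expectation_bound
    {Ω : Type*} [MeasurableSpace Ω] (μ : Measure Ω) [IsProbabilityMeasure μ]
    {n : ℕ} (ξ : Fin n → Ω → ℝ)
    (hnonneg : ∀ k ω, 0 ≤ ξ k ω)
    (hmeas : ∀ k, Measurable (ξ k))
    (hindep : iIndepFun ξ μ)
    (q : ℝ) (hq : 1 < q)
    (hΔ : weakMomentSup μ q ξ ≠ ⊤) :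
    ∫ ω, weakLpNorm q (fun k => ξ k ω) ∂μ
      ≤ (1 + 2 * Real.exp 1 / (q - 1)) * (weakMomentSup μ q ξ).toReal ^ (1 / q) := by
  have hq0 : 0 < q := by linarith
  set W := fun ω ↦ weakLpNorm q fun k ↦ ξ k ω
  have hW : Measurable W := (measurable_weakLpNorm hq0).comp (measurable_pi_lambda _ hmeas)
  have hW0 : ∀ ω, 0 ≤ W ω := fun ω ↦ weakLpNorm_nonneg _
  have htail : ∀ u > 0, μ {ω | u < W ω} ≤
      ENNReal.ofReal (2 * Real.exp 1 * (weakMomentSup μ q ξ).toReal / u ^ q) := fun u hu ↦ by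
    rw [← ofReal_measureReal]
    exact ENNReal.ofReal_le_ofReal <| measureReal_lt_weakLpNorm_le hnonneg hindep hq0
      (fun t ht ↦ rpow_mul_sum_measureReal_le_weakMomentSup hΔ ht) hu
  have hlintegral : ∫⁻ ω, ENNReal.ofReal (W ω) ∂μ ≤
      ENNReal.ofReal ((1 + 2 * Real.exp 1 / (q - 1)) * (weakMomentSup μ q ξ).toReal ^ (1 / q)) := by
    rw [lintegral_eq_lintegral_meas_lt μ (ae_of_all _ hW0) hW.aemeasurable]
    exact setLIntegral_Ioi_le_of_le_one_of_le_div_rpow hq (by positivity) ENNReal.toReal_nonneg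
      (fun _ ↦ prob_le_one) htail
  rw [integral_eq_lintegral_of_nonneg_ae (ae_of_all _ hW0) hW.aestronglyMeasurable]
  exact ENNReal.toReal_le_of_le_ofReal (by positivity) hlintegral
end

section
/- Let 1 < p < q, and let g : (0, ∞) → [0, 1] be a nonincreasing function with g(t) > 0 for all t > 0, sup_{t>0} t^p g(t) ≤ 1, and ∫_0^∞ g(t)^{1/p} dt < ∞. For n ≥ 1 set v_n := inf{ t > 0 : g(t) ≤ 1/n }. Then ∑_{n=1}^∞ n^{−(1 + 1/p − 1/q)} ∫_0^{v_n} g(u)^{1/q} du < ∞. -/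
/-! Put `δ = 1/p - 1/q`. For `0 < u < v (n+1)` the definition of `v` as an infimum forces
`g u > 1/(n+1)`, so after exchanging the (finite) sums with the integral only the indices with
`n + 1 > 1 / g u` contribute at `u`. Comparing that tail of `∑ (n+1)^(-(1+δ))` with
`∫ t^(-(1+δ)) dt` bounds it by `(1 + 1/δ) g(u)^δ`, and `g^δ g^(1/q) = g^(1/p)`. Hence every
partial sum is at most `(1 + 1/δ) ∫_0^∞ g^(1/p)`. -/

open MeasureTheory Filter

open Finset

theorem integral_rpow_neg_one_sub_le {δ a b : ℝ} (hδ : 0 < δ) (ha : 0 < a) (hab : a ≤ b) :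
    ∫ x in a..b, x ^ (-(1 + δ)) ≤ a ^ (-δ) / δ := by
  have h0 : (0 : ℝ) ∉ Set.uIcc a b := by
    rw [Set.uIcc_of_le hab]; exact fun h => ha.not_ge h.1
  rw [integral_rpow (Or.inr ⟨by linarith, h0⟩), show -(1 + δ) + 1 = -δ by ring, div_neg,
    ← neg_div, neg_sub]
  gcongr
  exact sub_le_self _ (Real.rpow_nonneg (ha.le.trans hab) _)

theorem sum_Ico_rpow_neg_one_sub_le {δ : ℝ} (hδ : 0 < δ) (m N : ℕ) :
    ∑ n ∈ Ico m N, ((n : ℝ) + 1) ^ (-(1 + δ)) ≤ (1 + 1 / δ) * ((m : ℝ) + 1) ^ (-δ) := by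
  rcases le_or_gt N m with hNm | hmN
  · rw [Ico_eq_empty_of_le hNm, sum_empty]; positivity
  have hhead : ((m : ℝ) + 1) ^ (-(1 + δ)) ≤ ((m : ℝ) + 1) ^ (-δ) :=
    Real.rpow_le_rpow_of_exponent_le (by linarith [m.cast_nonneg (α := ℝ)]) (by linarith)
  have htail : ∑ n ∈ Ico (m + 1) N, ((n : ℝ) + 1) ^ (-(1 + δ)) ≤ ((m : ℝ) + 1) ^ (-δ) / δ := by
    have hanti : AntitoneOn (fun x : ℝ => x ^ (-(1 + δ))) (Set.Icc ((m + 1 : ℕ) : ℝ) N) :=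
      fun x hx _ _ hxy => Real.rpow_le_rpow_of_nonpos
        (lt_of_lt_of_le (Nat.cast_pos.2 m.succ_pos) hx.1) hxy (by linarith)
    calc _ ≤ ∫ x in ((m + 1 : ℕ) : ℝ)..N, x ^ (-(1 + δ)) := by
          simpa using hanti.sum_le_integral_Ico hmN
      _ ≤ _ := by
          push_cast
          exact integral_rpow_neg_one_sub_le hδ (by positivity) (by exact_mod_cast hmN)
  rw [sum_eq_sum_Ico_succ_bot hmN, add_mul, one_mul, one_div_mul_eq_div]
  exact add_le_add hhead htail

theorem sum_filter_rpow_neg_one_sub_le {δ x : ℝ} (hδ : 0 < δ) (hx : 0 < x) (N : ℕ) :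
    ∑ n ∈ (range N).filter (fun n : ℕ => x < (n : ℝ) + 1), ((n : ℝ) + 1) ^ (-(1 + δ)) ≤
      (1 + 1 / δ) * x ^ (-δ) := by
  have hsub : (range N).filter (fun n : ℕ => x < (n : ℝ) + 1) ⊆ Ico ⌊x⌋₊ N := by
    intro n hn
    simp only [mem_filter, mem_range] at hn
    exact mem_Ico.2 ⟨Nat.lt_succ_iff.1 ((Nat.floor_lt hx.le).2 (by push_cast; exact hn.2)), hn.1⟩
  calc _ ≤ ∑ n ∈ Ico ⌊x⌋₊ N, ((n : ℝ) + 1) ^ (-(1 + δ)) :=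
        sum_le_sum_of_subset_of_nonneg hsub fun n _ _ => by positivity
    _ ≤ (1 + 1 / δ) * ((⌊x⌋₊ : ℝ) + 1) ^ (-δ) := sum_Ico_rpow_neg_one_sub_le hδ _ N
    _ ≤ (1 + 1 / δ) * x ^ (-δ) := by
        have := Real.rpow_le_rpow_of_nonpos hx (Nat.lt_floor_add_one x).le (neg_nonpos.2 hδ.le)
        gcongr

theorem sum_rpow_mul_indicator_le {α : Type*} {δ y : ℝ} (hδ : 0 < δ) (hy : 0 < y)
    {s : ℕ → Set α} {f : α → ℝ} {x : α} (hfx : 0 ≤ f x)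
    (hs : ∀ n, x ∈ s n → y⁻¹ < (n : ℝ) + 1) (N : ℕ) :
    ∑ n ∈ range N, ((n : ℝ) + 1) ^ (-(1 + δ)) * (s n).indicator f x ≤
      (1 + 1 / δ) * y ^ δ * f x := by
  calc ∑ n ∈ range N, ((n : ℝ) + 1) ^ (-(1 + δ)) * (s n).indicator f x
      ≤ ∑ n ∈ (range N).filter (fun n : ℕ => y⁻¹ < (n : ℝ) + 1),
          ((n : ℝ) + 1) ^ (-(1 + δ)) * f x := by
        rw [sum_filter]
        gcongr with n
        by_cases hn : x ∈ s n
        · simp [Set.indicator_of_mem hn, hs n hn]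
        · rw [Set.indicator_of_notMem hn, mul_zero]
          split_ifs <;> positivity
    _ = (∑ n ∈ (range N).filter (fun n : ℕ => y⁻¹ < (n : ℝ) + 1),
          ((n : ℝ) + 1) ^ (-(1 + δ))) * f x := (sum_mul ..).symm
    _ ≤ (1 + 1 / δ) * y⁻¹ ^ (-δ) * f x := by
        gcongr
        exact sum_filter_rpow_neg_one_sub_le hδ (inv_pos.2 hy) N
    _ = (1 + 1 / δ) * y ^ δ * f x := by
        rw [Real.inv_rpow hy.le, Real.rpow_neg hy.le, inv_inv]

theorem lt_of_lt_sInf_sublevel {g : ℝ → ℝ} {c u : ℝ} (hu : 0 < u)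
    (hlt : u < sInf {t | 0 < t ∧ g t ≤ c}) : c < g u := by
  by_contra! hgu
  exact (csInf_le (s := {t | 0 < t ∧ g t ≤ c}) ⟨0, fun _ ht => ht.1.le⟩ ⟨hu, hgu⟩).not_gt hlt

theorem MeasureTheory.AEStronglyMeasurable.rpow_of_rpow {α : Type*} [MeasurableSpace α]
    {μ : Measure α} {f : α → ℝ} {a b : ℝ} (ha : a ≠ 0) (hab : 0 ≤ b / a)
    (hf : ∀ᵐ x ∂μ, 0 ≤ f x) (h : AEStronglyMeasurable (fun x => f x ^ a) μ) :
    AEStronglyMeasurable (fun x => f x ^ b) μ :=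
  ((Real.continuous_rpow_const hab).comp_aestronglyMeasurable h).congr <| by
    filter_upwards [hf] with x hx
    simp only [← Real.rpow_mul hx, mul_div_cancel₀ _ ha]

theorem integrableOn_rpow_of_mem_unitInterval {α : Type*} [MeasurableSpace α] {μ : Measure α}
    {s : Set α} {f : α → ℝ} {a b : ℝ} (hs : MeasurableSet s) (hμs : μ s < ⊤) (ha : 0 < a)
    (hb : 0 ≤ b) (hf : ∀ x ∈ s, f x ∈ Set.Icc 0 1)
    (h : AEStronglyMeasurable (fun x => f x ^ a) (μ.restrict s)) :
    IntegrableOn (fun x => f x ^ b) s μ := by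
  refine .of_bound hμs (h.rpow_of_rpow ha.ne' (by positivity)
    (ae_restrict_of_forall_mem hs fun x hx => (hf x hx).1)) 1
    (ae_restrict_of_forall_mem hs fun x hx => ?_)
  rw [Real.norm_of_nonneg (Real.rpow_nonneg (hf x hx).1 _)]
  exact Real.rpow_le_one (hf x hx).1 (hf x hx).2 hb

theorem sum_mul_setIntegral_le_setIntegral {α ι : Type*} [MeasurableSpace α] {μ : Measure α}
    (t : Finset ι) {a : ι → ℝ} {s : ι → Set α} {S : Set α} {f h : α → ℝ}
    (hS : MeasurableSet S) (hs : ∀ i ∈ t, MeasurableSet (s i)) (hsS : ∀ i ∈ t, s i ⊆ S)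
    (hf : ∀ i ∈ t, IntegrableOn f (s i) μ) (hh : IntegrableOn h S μ)
    (hbound : ∀ x ∈ S, ∑ i ∈ t, a i * (s i).indicator f x ≤ h x) :
    ∑ i ∈ t, a i * ∫ x in s i, f x ∂μ ≤ ∫ x in S, h x ∂μ := by
  have hterm : ∀ i ∈ t, IntegrableOn (fun x => a i * (s i).indicator f x) S μ := fun i hi =>
    ((hf i hi).integrable_indicator (hs i hi)).integrableOn.const_mul (a i)
  calc ∑ i ∈ t, a i * ∫ x in s i, f x ∂μ
      = ∫ x in S, ∑ i ∈ t, a i * (s i).indicator f x ∂μ := by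
        rw [integral_finsetSum t hterm]
        refine sum_congr rfl fun i hi => ?_
        rw [integral_const_mul, setIntegral_indicator (hs i hi), Set.inter_eq_right.2 (hsS i hi)]
    _ ≤ ∫ x in S, h x ∂μ := setIntegral_mono_on (integrable_finsetSum t hterm) hh hS hbound

theorem truncated_series_summable_general
    (p q : ℝ) (hp : 1 < p) (hpq : p < q)
    (g : ℝ → ℝ)
    (hg01 : ∀ t > (0 : ℝ), 0 < g t ∧ g t ≤ 1)
    (hint : IntegrableOn (fun t => g t ^ (1 / p)) (Set.Ioi 0))
    (v : ℕ → ℝ)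
    (hv : ∀ n : ℕ, v n = sInf {t : ℝ | 0 < t ∧ g t ≤ 1 / n}) :
    Summable fun n : ℕ =>
      ((n : ℝ) + 1) ^ (-(1 + 1 / p - 1 / q)) * ∫ u in Set.Ioc 0 (v (n + 1)), g u ^ (1 / q) := by
  have hp0 : 0 < p := by linarith
  have hq0 : 0 < q := by linarith
  set δ := 1 / p - 1 / q with hδ_def
  have hδ : 0 < δ := sub_pos.2 (one_div_lt_one_div_of_lt hp0 hpq)
  have hgq_int (b : ℝ) : IntegrableOn (fun u => g u ^ (1 / q)) (Set.Ioo 0 b) :=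
    integrableOn_rpow_of_mem_unitInterval measurableSet_Ioo measure_Ioo_lt_top (one_div_pos.2 hp0)
      (by positivity) (fun t ht => ⟨(hg01 t ht.1).1.le, (hg01 t ht.1).2⟩)
      (hint.1.mono_measure (Measure.restrict_mono Set.Ioo_subset_Ioi_self le_rfl))
  have hlevel (n : ℕ) (u : ℝ) (hu : u ∈ Set.Ioo 0 (v (n + 1))) : (g u)⁻¹ < n + 1 := by
    rw [hv] at hu
    have := lt_of_lt_sInf_sublevel hu.1 hu.2
    push_cast at this
    rwa [inv_lt_comm₀ (hg01 u hu.1).1 (by positivity), ← one_div]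
  refine summable_of_sum_range_le (c := ∫ u in Set.Ioi 0, (1 + 1 / δ) * g u ^ (1 / p))
    (fun n => mul_nonneg (by positivity) (setIntegral_nonneg measurableSet_Ioc
      fun u hu => Real.rpow_nonneg (hg01 u hu.1).1.le _)) fun N => ?_
  -- `g u > 1/(n+1)` is only known strictly below `v (n+1)`, so drop the endpoint.
  simp_rw [integral_Ioc_eq_integral_Ioo, show -(1 + 1 / p - 1 / q) = -(1 + δ) by ring]
  refine sum_mul_setIntegral_le_setIntegral _ measurableSet_Ioi (fun _ _ => measurableSet_Ioo)
    (fun _ _ => Set.Ioo_subset_Ioi_self) (fun n _ => hgq_int _) (hint.const_mul _) fun u hu => ?_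
  have hgu := (hg01 u hu).1
  calc _ ≤ (1 + 1 / δ) * g u ^ δ * g u ^ (1 / q) :=
        sum_rpow_mul_indicator_le hδ hgu (by positivity) (hlevel · u) N
    _ = (1 + 1 / δ) * g u ^ (1 / p) := by
        rw [mul_assoc, ← Real.rpow_add hgu, hδ_def, sub_add_cancel]

/-- Let `1 < p < q` and let `g : (0,∞) → [0,1]` be nonincreasing and positive
with `sup_{t>0} t^p g(t) ≤ 1` and `∫_0^∞ g^{1/p} < ∞`. With truncation levels
`v_n = inf{t > 0 : g(t) ≤ 1/n}`, the series
`∑_n n^{-(1+1/p-1/q)} ∫_0^{v_n} g(u)^{1/q} du` converges. -/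
theorem truncated_series_summable
    (p q : ℝ) (hp : 1 < p) (hpq : p < q)
    (g : ℝ → ℝ)
    (hg01 : ∀ t > (0 : ℝ), 0 < g t ∧ g t ≤ 1)
    (hanti : AntitoneOn g (Set.Ioi 0))
    (hnorm : ∀ t > (0 : ℝ), t ^ p * g t ≤ 1)
    (hint : IntegrableOn (fun t => g t ^ (1 / p)) (Set.Ioi 0))
    (v : ℕ → ℝ)
    (hv : ∀ n : ℕ, v n = sInf {t : ℝ | 0 < t ∧ g t ≤ 1 / n}) :
    Summable fun n : ℕ =>
      ((n : ℝ) + 1) ^ (-(1 + 1 / p - 1 / q)) * ∫ u in Set.Ioc 0 (v (n + 1)), g u ^ (1 / q) :=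
  truncated_series_summable_general p q hp hpq g hg01 hint v hv
end

section
/- Let 1 < p < 2 and let g : (0, ∞) → [0, 1] be a nonincreasing function with g(t) > 0 for all t > 0, sup_{t>0} t^p g(t) ≤ 1, and ∫_0^∞ g(t)^{1/p} dt < ∞. For n ≥ 1 set v_n := inf{ t > 0 : g(t) ≤ 1/n }. Then ∑_{n=1}^∞ v_n / n^{1 + 1/p} < ∞. -/
open MeasureTheory Filter ENNReal

/-!
By Tonelli, `∑ₙ cₙ vₙ = ∫₀^∞ ∑_{n : t < vₙ} cₙ dt` with `cₙ = n^{-(1+1/p)}`. If `t < vₙ` then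
`g t > 1/n`, so `n ≥ (n + 1/g t)/2`; comparing `∑ₙ (n + 1/g t)^{-(1+1/p)}` with the integral of
`x^{-(1+1/p)}` over `[1/g t, ∞)` bounds the inner sum by a constant times `g(t)^{1/p}`, which is
integrable.
-/

theorem sum_range_rpow_add_succ_le {q x : ℝ} (hq : 0 < q) (hx : 0 < x) (N : ℕ) :
    ∑ n ∈ Finset.range N, (x + (n + 1)) ^ (-(1 + q)) ≤ x ^ (-q) / q := by
  have hanti : AntitoneOn (fun y : ℝ => y ^ (-(1 + q))) (Set.Icc x (x + N)) :=
    fun a ha b _ hab => Real.rpow_le_rpow_of_nonpos (hx.trans_le ha.1) hab (by linarith)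
  have hzero : (0 : ℝ) ∉ Set.uIcc x (x + N) := by
    rw [Set.uIcc_of_le (by simp)]; exact fun h => hx.not_ge h.1
  calc ∑ n ∈ Finset.range N, (x + (n + 1)) ^ (-(1 + q))
      ≤ ∫ y in x..x + N, y ^ (-(1 + q)) := by exact_mod_cast hanti.sum_le_integral
    _ = (x ^ (-q) - (x + N) ^ (-q)) / q := by
      rw [integral_rpow (.inr ⟨by linarith, hzero⟩), show -(1 + q) + 1 = -q by ring, div_neg,
        ← neg_div, neg_sub]
    _ ≤ x ^ (-q) / q := by
      gcongr
      exact sub_le_self _ (Real.rpow_nonneg (by positivity) _)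

theorem tsum_ofReal_rpow_add_succ_le {q x : ℝ} (hq : 0 < q) (hx : 0 < x) :
    ∑' n : ℕ, ENNReal.ofReal ((x + (n + 1)) ^ (-(1 + q))) ≤ ENNReal.ofReal (x ^ (-q) / q) := by
  refine ENNReal.tsum_le_of_sum_range_le fun N => ?_
  rw [← ENNReal.ofReal_sum_of_nonneg fun n _ => Real.rpow_nonneg (by positivity) _]
  exact ENNReal.ofReal_le_ofReal (sum_range_rpow_add_succ_le hq hx N)

theorem Real.rpow_neg_le_two_rpow_mul_rpow_neg_add {a b s : ℝ} (ha : 0 < a) (hb : 0 ≤ b)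
    (hba : b ≤ a) (hs : 0 ≤ s) : a ^ (-s) ≤ 2 ^ s * (b + a) ^ (-s) := by
  calc a ^ (-s) = 2 ^ s * (2 * a) ^ (-s) := by
        rw [Real.mul_rpow zero_le_two ha.le, Real.rpow_neg zero_le_two, ← mul_assoc,
          mul_inv_cancel₀ (by positivity), one_mul]
    _ ≤ 2 ^ s * (b + a) ^ (-s) :=
        mul_le_mul_of_nonneg_left
          (Real.rpow_le_rpow_of_nonpos (by positivity) (by linarith) (by linarith)) (by positivity)

theorem tsum_mul_ofReal_eq_lintegral_tsum_indicator (c : ℕ → ℝ≥0∞) (w : ℕ → ℝ) :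
    ∑' n, c n * ENNReal.ofReal (w n) =
      ∫⁻ t in Set.Ioi 0, ∑' n, (Set.Iio (w n)).indicator (fun _ => c n) t := by
  rw [lintegral_tsum fun n => (aemeasurable_const.indicator measurableSet_Iio)]
  congr 1 with n
  rw [lintegral_indicator_const measurableSet_Iio, Measure.restrict_apply measurableSet_Iio,
    Set.Iio_inter_Ioi, Real.volume_Ioo, sub_zero]

theorem lt_of_lt_sInf_setOf_le {g : ℝ → ℝ} {c t : ℝ} (ht : 0 < t)
    (htv : t < sInf {s | 0 < s ∧ g s ≤ c}) : c < g t :=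
  not_le.1 fun hle => notMem_of_lt_csInf htv ⟨0, fun _ hs => hs.1.le⟩ ⟨ht, hle⟩

theorem ofReal_rpow_neg_le_of_one_div_lt {q y : ℝ} (hq : 0 < q) (hy : 0 < y) {n : ℕ}
    (hn : 1 / ((n : ℝ) + 1) < y) :
    ENNReal.ofReal (((n : ℝ) + 1) ^ (-(1 + q))) ≤
      ENNReal.ofReal (2 ^ (1 + q)) * ENNReal.ofReal ((1 / y + (n + 1)) ^ (-(1 + q))) := by
  rw [← ENNReal.ofReal_mul (by positivity)]
  refine ENNReal.ofReal_le_ofReal (Real.rpow_neg_le_two_rpow_mul_rpow_neg_add (by positivity)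
    (by positivity) ?_ (by positivity))
  rw [div_le_iff₀ hy]
  rw [div_lt_iff₀ (by positivity)] at hn
  linarith

theorem truncation_levels_summable_general
    (p : ℝ) (hp1 : 1 < p)
    (g : ℝ → ℝ)
    (hg01 : ∀ t > (0 : ℝ), 0 < g t ∧ g t ≤ 1)
    (hint : IntegrableOn (fun t => g t ^ (1 / p)) (Set.Ioi 0))
    (v : ℕ → ℝ)
    (hv : ∀ n : ℕ, v n = sInf {t : ℝ | 0 < t ∧ g t ≤ 1 / n}) :
    Summable fun n : ℕ => v (n + 1) / ((n : ℝ) + 1) ^ (1 + 1 / p) := by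
  set q := 1 / p
  have hq : 0 < q := one_div_pos.2 (by linarith)
  set c : ℕ → ℝ≥0∞ := fun n => ENNReal.ofReal (((n : ℝ) + 1) ^ (-(1 + q)))
  have hpointwise : ∀ t ∈ Set.Ioi (0 : ℝ),
      ∑' n, (Set.Iio (v (n + 1))).indicator (fun _ => c n) t ≤
        ENNReal.ofReal (2 ^ (1 + q) / q * g t ^ q) := by
    intro t ht
    have hgt := (hg01 t ht).1
    calc ∑' n, (Set.Iio (v (n + 1))).indicator (fun _ => c n) t
        ≤ ∑' n : ℕ, ENNReal.ofReal (2 ^ (1 + q)) *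
            ENNReal.ofReal ((1 / g t + (n + 1)) ^ (-(1 + q))) := by
          refine ENNReal.tsum_le_tsum fun n =>
            Set.indicator_apply_le' (fun htv => ?_) fun _ => zero_le
          refine ofReal_rpow_neg_le_of_one_div_lt hq hgt ?_
          exact_mod_cast lt_of_lt_sInf_setOf_le ht (hv (n + 1) ▸ htv)
      _ ≤ ENNReal.ofReal (2 ^ (1 + q)) * ENNReal.ofReal ((1 / g t) ^ (-q) / q) := by
          rw [ENNReal.tsum_mul_left]
          gcongr
          exact tsum_ofReal_rpow_add_succ_le hq (by positivity)
      _ = ENNReal.ofReal (2 ^ (1 + q) / q * g t ^ q) := by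
          rw [← ENNReal.ofReal_mul (by positivity), one_div, Real.inv_rpow hgt.le,
            Real.rpow_neg hgt.le, inv_inv]
          ring_nf
  have hfinite : ∑' n, c n * ENNReal.ofReal (v (n + 1)) ≠ ∞ := by
    rw [tsum_mul_ofReal_eq_lintegral_tsum_indicator]
    refine ne_top_of_le_ne_top ((hint.const_mul (2 ^ (1 + q) / q)).lintegral_lt_top.ne) ?_
    exact lintegral_mono_ae ((ae_restrict_iff' measurableSet_Ioi).2 (.of_forall hpointwise))
  refine (ENNReal.summable_toReal hfinite).congr fun n => ?_
  have hv_nonneg : 0 ≤ v (n + 1) := hv (n + 1) ▸ Real.sInf_nonneg fun _ ht => ht.1.le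
  rw [ENNReal.toReal_mul, ENNReal.toReal_ofReal hv_nonneg, ENNReal.toReal_ofReal (by positivity),
    Real.rpow_neg (by positivity), div_eq_inv_mul]

/-- Let `1 < p < 2` and let `g : (0,∞) → [0,1]` be nonincreasing and positive
with `sup_{t>0} t^p g(t) ≤ 1` and `∫_0^∞ g^{1/p} < ∞`. With truncation levels
`v_n = inf{t > 0 : g(t) ≤ 1/n}`, the series `∑_n v_n / n^{1+1/p}` converges. -/
theorem truncation_levels_summable
    (p : ℝ) (hp1 : 1 < p) (hp2 : p < 2)
    (g : ℝ → ℝ)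
    (hg01 : ∀ t > (0 : ℝ), 0 < g t ∧ g t ≤ 1)
    (hanti : AntitoneOn g (Set.Ioi 0))
    (hnorm : ∀ t > (0 : ℝ), t ^ p * g t ≤ 1)
    (hint : IntegrableOn (fun t => g t ^ (1 / p)) (Set.Ioi 0))
    (v : ℕ → ℝ)
    (hv : ∀ n : ℕ, v n = sInf {t : ℝ | 0 < t ∧ g t ≤ 1 / n}) :
    Summable fun n : ℕ => v (n + 1) / ((n : ℝ) + 1) ^ (1 + 1 / p) :=
  truncation_levels_summable_general p hp1 g hg01 hint v hv
end

section
/- Let 1 < p < 2 and let g : (0, ∞) → [0, 1] be a nonincreasing function with g(t) > 0 for all t > 0, sup_{t>0} t^p g(t) ≤ 1, and ∫_0^∞ g(t)^{1/p} dt < ∞. For n ≥ 1 set v_n := inf{ t > 0 : g(t) ≤ 1/n }. Then ∑_{n=1}^∞ n^{−1/p} ∫_{v_n}^∞ g(u) du < ∞. -/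
/-!
Exchanging sum and integral, the `N`-th partial sum equals
`∫₀^∞ g(u) ∑_{n < N, v_{n+1} < u} (n+1)^{-1/p} du`. Beyond `v_{n+1}` we have `g ≤ 1/(n+1)`,
so only indices with `n + 1 ≤ 1/g(u)` contribute, and comparing `∑_{k ≤ K} k^{-1/p}` with
`K^{1-1/p}/(1-1/p)` bounds the integrand by `g(u)^{1/p}/(1-1/p)`. Hence all partial sums are at most
`(∫₀^∞ g^{1/p})/(1-1/p)`.
-/

open MeasureTheory Finset

lemma mul_rpow_sub_one_le_rpow_sub_rpow {b : ℝ} (hb0 : 0 ≤ b) (hb1 : b ≤ 1) {x : ℝ}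
    (hx : 0 ≤ x) :
    b * (x + 1) ^ (b - 1) ≤ (x + 1) ^ b - x ^ b := by
  have hy : 0 < x + 1 := by linarith
  have hbern := rpow_one_add_le_one_add_mul_self (s := -(x + 1)⁻¹)
    (by rw [neg_le_neg_iff]; exact inv_le_one_of_one_le₀ (by linarith)) hb0 hb1
  rw [show 1 + -(x + 1)⁻¹ = x / (x + 1) by field_simp; ring, Real.div_rpow hx hy.le,
    div_le_iff₀ (by positivity)] at hbern
  rw [Real.rpow_sub_one hy.ne']
  calc b * ((x + 1) ^ b / (x + 1)) = (x + 1) ^ b - (1 + b * -(x + 1)⁻¹) * (x + 1) ^ b := by ring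
    _ ≤ (x + 1) ^ b - x ^ b := by linarith

lemma sum_range_rpow_neg_le {q : ℝ} (hq0 : 0 ≤ q) (hq1 : q < 1) (K : ℕ) :
    ∑ n ∈ range K, ((n : ℝ) + 1) ^ (-q) ≤ (K : ℝ) ^ (1 - q) / (1 - q) := by
  have hq : 0 < 1 - q := by linarith
  rw [le_div_iff₀ hq, sum_mul]
  calc ∑ n ∈ range K, ((n : ℝ) + 1) ^ (-q) * (1 - q)
      ≤ ∑ n ∈ range K, (((n + 1 : ℕ) : ℝ) ^ (1 - q) - (n : ℝ) ^ (1 - q)) := by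
        gcongr with n
        push_cast
        rw [mul_comm, show -q = 1 - q - 1 by ring]
        exact mul_rpow_sub_one_le_rpow_sub_rpow hq.le (by linarith) n.cast_nonneg
    _ = (K : ℝ) ^ (1 - q) := by
        rw [sum_range_sub (fun n : ℕ => (n : ℝ) ^ (1 - q)), Nat.cast_zero,
          Real.zero_rpow hq.ne', sub_zero]

lemma sum_rpow_neg_mul_le {q y : ℝ} (hq0 : 0 ≤ q) (hq1 : q < 1) (hy : 0 < y) (s : Finset ℕ)
    (hs : ∀ n ∈ s, ((n : ℝ) + 1) * y ≤ 1) :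
    ∑ n ∈ s, ((n : ℝ) + 1) ^ (-q) * y ≤ y ^ q / (1 - q) := by
  have hsK : s ⊆ range ⌊y⁻¹⌋₊ := fun n hn => by
    rw [mem_range, ← Nat.add_one_le_iff]
    exact Nat.le_floor (by push_cast; rw [← one_div, le_div_iff₀ hy]; exact hs n hn)
  calc ∑ n ∈ s, ((n : ℝ) + 1) ^ (-q) * y
      ≤ (∑ n ∈ range ⌊y⁻¹⌋₊, ((n : ℝ) + 1) ^ (-q)) * y := by
        rw [sum_mul]
        exact sum_le_sum_of_subset_of_nonneg hsK fun n _ _ => by positivity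
    _ ≤ (y⁻¹ ^ (1 - q) / (1 - q)) * y := by
        gcongr
        refine (sum_range_rpow_neg_le hq0 hq1 _).trans ?_
        gcongr
        exact Nat.floor_le (by positivity)
    _ = y ^ q / (1 - q) := by
        rw [Real.inv_rpow hy.le, ← Real.rpow_neg hy.le, div_mul_eq_mul_div,
          ← Real.rpow_add_one hy.ne']
        ring_nf

lemma MeasureTheory.IntegrableOn.of_rpow_of_le_one {α : Type*} [MeasurableSpace α]
    {μ : Measure α} {s : Set α} {f : α → ℝ} {q : ℝ} (hs : MeasurableSet s)
    (hf : AEStronglyMeasurable f (μ.restrict s)) (hq : q ≤ 1) (hf01 : ∀ x ∈ s, 0 < f x ∧ f x ≤ 1)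
    (hfq : IntegrableOn (fun x => f x ^ q) s μ) : IntegrableOn f s μ := by
  refine Integrable.mono hfq hf ?_
  filter_upwards [ae_restrict_mem hs] with x hx
  obtain ⟨hx0, hx1⟩ := hf01 x hx
  rw [Real.norm_of_nonneg hx0.le, Real.norm_of_nonneg (by positivity)]
  simpa using Real.rpow_le_rpow_of_exponent_ge hx0 hx1 hq

lemma sum_mul_setIntegral_Ioi_eq {g : ℝ → ℝ} {a : ℝ} (hg : IntegrableOn g (Set.Ioi a))
    (c w : ℕ → ℝ) (hw : ∀ n, a ≤ w n) (s : Finset ℕ) :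
    ∑ n ∈ s, c n * ∫ u in Set.Ioi (w n), g u =
      ∫ u in Set.Ioi a, ∑ n ∈ s, c n * (Set.Ioi (w n)).indicator g u := by
  rw [integral_finsetSum _ fun n _ => (hg.indicator measurableSet_Ioi).const_mul _]
  refine sum_congr rfl fun n _ => ?_
  rw [integral_const_mul, setIntegral_indicator measurableSet_Ioi, Set.Ioi_inter_Ioi,
    sup_eq_right.mpr (hw n)]

lemma AntitoneOn.le_of_sInf_lt {g : ℝ → ℝ} (hg : AntitoneOn g (Set.Ioi 0)) {c u : ℝ}
    (hne : {t | 0 < t ∧ g t ≤ c}.Nonempty) (hu : sInf {t | 0 < t ∧ g t ≤ c} < u) :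
    g u ≤ c := by
  obtain ⟨t, ht, htu⟩ := exists_lt_of_csInf_lt hne hu
  exact (hg ht.1 (ht.1.trans htu) htu.le).trans ht.2

lemma nonempty_setOf_le_one_div {p : ℝ} (hp : 0 < p) {g : ℝ → ℝ}
    (hnorm : ∀ t > (0 : ℝ), t ^ p * g t ≤ 1) {x : ℝ} (hx : 0 < x) :
    {t | 0 < t ∧ g t ≤ 1 / x}.Nonempty := by
  refine ⟨x ^ (1 / p), by positivity, ?_⟩
  have h := hnorm (x ^ (1 / p)) (by positivity)
  rwa [← Real.rpow_mul hx.le, one_div_mul_cancel hp.ne', Real.rpow_one,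
    ← le_div_iff₀' hx] at h

theorem tail_integral_series_summable_general
    (p : ℝ) (hp1 : 1 < p)
    (g : ℝ → ℝ)
    (hg01 : ∀ t > (0 : ℝ), 0 < g t ∧ g t ≤ 1)
    (hanti : AntitoneOn g (Set.Ioi 0))
    (hnorm : ∀ t > (0 : ℝ), t ^ p * g t ≤ 1)
    (hint : IntegrableOn (fun t => g t ^ (1 / p)) (Set.Ioi 0))
    (v : ℕ → ℝ)
    (hv : ∀ n : ℕ, v n = sInf {t : ℝ | 0 < t ∧ g t ≤ 1 / n}) :
    Summable fun n : ℕ =>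
      ((n : ℝ) + 1) ^ (-(1 / p)) * ∫ u in Set.Ioi (v (n + 1)), g u := by
  have hp0 : 0 < p := by linarith
  have hq1 : 1 / p < 1 := (div_lt_one hp0).2 hp1
  have hv0 : ∀ n, 0 ≤ v n := fun n => (hv n).symm ▸ Real.sInf_nonneg fun t ht => ht.1.le
  have hgv : ∀ n u, v (n + 1) < u → ((n : ℝ) + 1) * g u ≤ 1 := fun n u hu => by
    have hn : (0 : ℝ) < n + 1 := by positivity
    rw [hv, Nat.cast_succ] at hu
    rw [← le_div_iff₀' hn]
    exact hanti.le_of_sInf_lt (nonempty_setOf_le_one_div hp0 hnorm hn) hu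
  have hg : IntegrableOn g (Set.Ioi 0) :=
    .of_rpow_of_le_one measurableSet_Ioi
      (aemeasurable_restrict_of_antitoneOn measurableSet_Ioi hanti).aestronglyMeasurable
      hq1.le hg01 hint
  refine summable_of_sum_range_le (c := (∫ u in Set.Ioi 0, g u ^ (1 / p)) / (1 - 1 / p))
    (fun n => ?_) (fun N => ?_)
  · refine mul_nonneg (by positivity) (setIntegral_nonneg measurableSet_Ioi fun u hu => ?_)
    exact (hg01 u ((hv0 _).trans_lt hu)).1.le
  rw [sum_mul_setIntegral_Ioi_eq hg _ _ (fun n => hv0 (n + 1)), ← integral_div]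
  refine setIntegral_mono_on ?_ (hint.div_const _) measurableSet_Ioi fun u hu => ?_
  · exact integrable_finsetSum _ fun n _ => (hg.indicator measurableSet_Ioi).const_mul _
  simp only [Set.indicator_apply, Set.mem_Ioi, mul_ite, mul_zero, ← sum_filter]
  exact sum_rpow_neg_mul_le (by positivity) hq1 (hg01 u hu).1 _
    fun n hn => hgv n u (mem_filter.1 hn).2

/-- Let `1 < p < 2` and let `g : (0,∞) → [0,1]` be nonincreasing and positive
with `sup_{t>0} t^p g(t) ≤ 1` and `∫_0^∞ g^{1/p} < ∞`. With truncation levels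
`v_n = inf{t > 0 : g(t) ≤ 1/n}`, the series `∑_n n^{-1/p} ∫_{v_n}^∞ g(u) du` converges. -/
theorem tail_integral_series_summable
    (p : ℝ) (hp1 : 1 < p) (hp2 : p < 2)
    (g : ℝ → ℝ)
    (hg01 : ∀ t > (0 : ℝ), 0 < g t ∧ g t ≤ 1)
    (hanti : AntitoneOn g (Set.Ioi 0))
    (hnorm : ∀ t > (0 : ℝ), t ^ p * g t ≤ 1)
    (hint : IntegrableOn (fun t => g t ^ (1 / p)) (Set.Ioi 0))
    (v : ℕ → ℝ)
    (hv : ∀ n : ℕ, v n = sInf {t : ℝ | 0 < t ∧ g t ≤ 1 / n}) :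
    Summable fun n : ℕ =>
      ((n : ℝ) + 1) ^ (-(1 / p)) * ∫ u in Set.Ioi (v (n + 1)), g u :=
  tail_integral_series_summable_general p hp1 g hg01 hanti hnorm hint v hv
end

section
/- Let 1 < p < 2, let B be a real separable Banach space, and let (Y_n) be a sequence of independent, Bochner integrable, mean-zero B-valued random variables with T_n := Y_1 + ⋯ + Y_n and G_n := σ(Y_1, …, Y_n). If ∑_{n=1}^∞ E‖T_n‖ / n^{1 + 1/p} < ∞, then ∑_{n=1}^∞ E | E( ‖T_{n+1}‖/(n+1)^{1/p} − ‖T_n‖/n^{1/p} | G_n ) | < ∞; that is, the real-valued sequence (‖T_n‖/n^{1/p}, G_n) is a nonnegative quasimartingale. -/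
open MeasureTheory ProbabilityTheory Filter Finset

/-- `partialSum Y n = Y 0 + ⋯ + Y (n-1)`. -/
noncomputable def partialSum {Ω B : Type*} [AddCommMonoid B] (Y : ℕ → Ω → B) (n : ℕ)
    (ω : Ω) : B :=
  ∑ i ∈ Finset.range n, Y i ω

/-- The natural filtration `G_n = σ(Y 0, …, Y (n-1))`. -/
def natFiltration {Ω B : Type*} [MeasurableSpace B] (Y : ℕ → Ω → B) (n : ℕ) :
    MeasurableSpace Ω :=
  ⨆ i ∈ Finset.range n, MeasurableSpace.comap (Y i) inferInstance

/-!
`‖T_n‖` is a nonnegative submartingale, by conditional Jensen applied to the martingale `T_n`.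
For a nonnegative submartingale `X` and nondecreasing positive weights `c`, the conditional
increment of `X_n / c_n` is `(E(X_{n+1} | G_n) - X_n) / c_{n+1} - X_n (1/c_n - 1/c_{n+1})`, a
nonnegative term minus a nonnegative term. Bounding its absolute value by their sum and
integrating, the partial sums of `E|E(X_{n+1}/c_{n+1} - X_n/c_n | G_n)|` telescope to at most
`sup_n E X_n / c_n + 2 ∑_n E X_n (1/c_n - 1/c_{n+1})`. For `c_n = n^{1/p}` one has
`1/c_n - 1/c_{n+1} ≤ n^{-1-1/p}`, so the hypothesis dominates the series; and since `E‖T_n‖` is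
nondecreasing, comparing `E‖T_N‖ / N^{1/p}` with the block `N ≤ n ≤ 2N` of the hypothesis shows
that the supremum is finite.
-/

theorem abs_div_sub_div_le {a b c₁ c₂ : ℝ} (hb : 0 ≤ b) (hba : b ≤ a) (hc₁ : 0 < c₁)
    (hc : c₁ ≤ c₂) : |a / c₂ - b / c₁| ≤ (a - b) / c₂ + b * (1 / c₁ - 1 / c₂) := by
  have hc₂ : 0 < c₂ := hc₁.trans_le hc
  have hab : 0 ≤ (a - b) / c₂ := div_nonneg (sub_nonneg.2 hba) hc₂.le
  have hinv : 0 ≤ b * (1 / c₁ - 1 / c₂) :=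
    mul_nonneg hb (sub_nonneg.2 (one_div_le_one_div_of_le hc₁ hc))
  have hsplit : a / c₂ - b / c₁ = (a - b) / c₂ - b * (1 / c₁ - 1 / c₂) := by
    field_simp
    ring
  rw [hsplit, abs_le]
  constructor <;> linarith

theorem one_div_rpow_sub_one_div_rpow_add_one_le {x q : ℝ} (hx : 0 < x) (hq0 : 0 ≤ q)
    (hq1 : q ≤ 1) : 1 / x ^ q - 1 / (x + 1) ^ q ≤ 1 / x ^ (1 + q) := by
  have hu : 0 < x ^ q := Real.rpow_pos_of_pos hx q
  have hv : 0 < (x + 1) ^ q := Real.rpow_pos_of_pos (by linarith) q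
  have huv : x ^ q ≤ (x + 1) ^ q := Real.rpow_le_rpow hx.le (by linarith) hq0
  -- `t ≤ t ^ q` for `t = x / (x + 1) ∈ (0, 1]`
  have hratio : x / (x + 1) ≤ x ^ q / (x + 1) ^ q := by
    rw [← Real.div_rpow hx.le (by linarith)]
    simpa using Real.rpow_le_rpow_of_exponent_ge (by positivity)
      ((div_le_one (by linarith)).2 (by linarith)) hq1
  rw [div_le_div_iff₀ (by linarith) hv] at hratio
  rw [Real.rpow_one_add' hx.le (by linarith), div_sub_div _ _ hu.ne' hv.ne',
    div_le_div_iff₀ (by positivity) (by positivity)]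
  nlinarith [mul_pos hx hu]

theorem Monotone.div_rpow_le_two_rpow_mul_tsum {a : ℕ → ℝ} (ha : Monotone a)
    (ha0 : ∀ n, 0 ≤ a n) {q : ℝ} (hq : 0 ≤ q)
    (hs : Summable fun n : ℕ => a n / ((n : ℝ) + 1) ^ (1 + q)) (N : ℕ) :
    a N / ((N : ℝ) + 1) ^ q ≤ 2 ^ (1 + q) * ∑' n : ℕ, a n / ((n : ℝ) + 1) ^ (1 + q) := by
  set D : ℝ := (2 * ((N : ℝ) + 1)) ^ (1 + q) with hD_def
  have hD : D = 2 ^ (1 + q) * (((N : ℝ) + 1) * ((N : ℝ) + 1) ^ q) := by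
    rw [hD_def, Real.mul_rpow (by norm_num) (by positivity),
      Real.rpow_one_add' (x := (N : ℝ) + 1) (by positivity) (by linarith)]
  have hterm : ∀ n ∈ Ico N (2 * N + 1), a N / D ≤ a n / ((n : ℝ) + 1) ^ (1 + q) := by
    intro n hn
    rw [mem_Ico] at hn
    have hn' : (n : ℝ) + 1 ≤ 2 * ((N : ℝ) + 1) := by
      have : (n : ℝ) ≤ 2 * N := by exact_mod_cast Nat.lt_succ_iff.mp hn.2
      linarith
    exact div_le_div₀ (ha0 n) (ha hn.1) (by positivity)
      (Real.rpow_le_rpow (by positivity) hn' (by linarith))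
  have hblock : ((N : ℝ) + 1) * (a N / D) ≤ ∑' n : ℕ, a n / ((n : ℝ) + 1) ^ (1 + q) := by
    have := (card_nsmul_le_sum _ _ _ hterm).trans
      (hs.sum_le_tsum _ fun n _ => div_nonneg (ha0 n) (by positivity))
    simpa [Nat.card_Ico, show 2 * N + 1 - N = N + 1 by omega] using this
  calc a N / ((N : ℝ) + 1) ^ q = 2 ^ (1 + q) * (((N : ℝ) + 1) * (a N / D)) := by
        rw [hD]; field_simp
    _ ≤ _ := by gcongr

theorem natFiltration_succ_eq_natural {Ω E : Type*} {m0 : MeasurableSpace Ω} [TopologicalSpace E]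
    [TopologicalSpace.MetrizableSpace E] [MeasurableSpace E] [BorelSpace E] {Y : ℕ → Ω → E}
    (hY : ∀ n, StronglyMeasurable (Y n)) (n : ℕ) :
    natFiltration Y (n + 1) = Filtration.natural Y hY n := by
  simp only [natFiltration, mem_range, Nat.lt_succ_iff]
  rfl

section Martingale

variable {Ω E : Type*} {m0 : MeasurableSpace Ω} {μ : Measure Ω}
  [NormedAddCommGroup E] [NormedSpace ℝ E] [CompleteSpace E]

theorem MeasureTheory.Martingale.submartingale_norm {ι : Type*} [Preorder ι] {f : ι → Ω → E}
    {ℱ : Filtration ι m0} (hf : Martingale f ℱ μ) :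
    Submartingale (fun i ω => ‖f i ω‖) ℱ μ := by
  refine ⟨fun i => (hf.stronglyMeasurable i).norm, fun i j hij => ?_,
    fun i => (hf.integrable i).norm⟩
  filter_upwards [hf.condExp_ae_eq hij, norm_condExp_le (μ := μ) (m := ℱ i) (f j)]
    with ω hmart hjensen
  rw [← hmart]
  exact hjensen

theorem ProbabilityTheory.iIndepFun.martingale_partialSum [MeasurableSpace E] [BorelSpace E]
    [SecondCountableTopology E] {Y : ℕ → Ω → E} (hY : ∀ n, StronglyMeasurable (Y n))
    (hint : ∀ n, Integrable (Y n) μ) (hmean : ∀ n, μ[Y n] = 0) (hindep : iIndepFun Y μ) :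
    Martingale (fun n => partialSum Y (n + 1)) (Filtration.natural Y hY) μ := by
  have : IsProbabilityMeasure μ := hindep.isProbabilityMeasure
  refine martingale_of_condExp_sub_eq_zero_nat (fun n => ?_)
    (fun n => integrable_finsetSum _ fun i _ => hint i) fun n => ?_
  · refine Finset.stronglyMeasurable_fun_sum _ fun i hi => ?_
    exact (Filtration.stronglyAdapted_natural hY i).mono
      (Filtration.mono _ (Nat.lt_succ_iff.mp (mem_range.mp hi)))
  · have hincr : partialSum Y (n + 1 + 1) - partialSum Y (n + 1) = Y (n + 1) := by
      ext ω
      simp [partialSum, sum_range_succ _ (n + 1)]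
    rw [hincr]
    filter_upwards [hindep.condExp_natural_ae_eq_of_lt hY n.lt_succ_self] with ω hω
    rw [hω, hmean, Pi.zero_apply]

end Martingale

section Quasimartingale

variable {Ω : Type*} {m0 : MeasurableSpace Ω} {μ : Measure Ω} {X : ℕ → Ω → ℝ}
  {ℱ : Filtration ℕ m0} [SigmaFiniteFiltration μ ℱ] {c : ℕ → ℝ}

theorem MeasureTheory.Submartingale.integral_abs_condExp_div_sub_div_le
    (hX : Submartingale X ℱ μ) (hX0 : ∀ n ω, 0 ≤ X n ω) {n : ℕ} (hc0 : 0 < c n)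
    (hc : c n ≤ c (n + 1)) :
    ∫ ω, |μ[fun ω => X (n + 1) ω / c (n + 1) - X n ω / c n | ℱ n] ω| ∂μ
      ≤ (μ[X (n + 1)] / c (n + 1) - μ[X n] / c n)
        + 2 * (μ[X n] * (1 / c n - 1 / c (n + 1))) := by
  set Z := μ[X (n + 1) | ℱ n]
  have hcond : μ[fun ω => X (n + 1) ω / c (n + 1) - X n ω / c n | ℱ n]
      =ᵐ[μ] fun ω => Z ω / c (n + 1) - X n ω / c n := by
    have hfun : (fun ω => X (n + 1) ω / c (n + 1) - X n ω / c n)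
        = (c (n + 1))⁻¹ • X (n + 1) - (c n)⁻¹ • X n := by
      ext ω
      simp [div_eq_inv_mul]
    rw [hfun]
    filter_upwards [condExp_sub ((hX.integrable _).smul (c (n + 1))⁻¹)
        ((hX.integrable n).smul (c n)⁻¹) (ℱ n),
      condExp_smul (c (n + 1))⁻¹ (X (n + 1)) (ℱ n)] with ω hsub hsmul
    rw [hsub, Pi.sub_apply, hsmul, condExp_of_stronglyMeasurable (ℱ.le n)
      ((hX.stronglyMeasurable n).const_smul _) ((hX.integrable n).smul (c n)⁻¹)]
    simp [Z, div_eq_inv_mul]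
  have hbound : ∀ᵐ ω ∂μ, |μ[fun ω => X (n + 1) ω / c (n + 1) - X n ω / c n | ℱ n] ω|
      ≤ (Z ω - X n ω) / c (n + 1) + X n ω * (1 / c n - 1 / c (n + 1)) := by
    filter_upwards [hcond, hX.ae_le_condExp n.le_succ] with ω hω hsub
    rw [hω]
    exact abs_div_sub_div_le (hX0 n ω) hsub hc0 hc
  have hZX : Integrable (fun ω => (Z ω - X n ω) / c (n + 1)) μ :=
    (integrable_condExp.sub (hX.integrable n)).div_const _
  have hXc : Integrable (fun ω => X n ω * (1 / c n - 1 / c (n + 1))) μ :=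
    (hX.integrable n).mul_const _
  calc _ ≤ ∫ ω, ((Z ω - X n ω) / c (n + 1) + X n ω * (1 / c n - 1 / c (n + 1))) ∂μ :=
        integral_mono_ae integrable_condExp.abs (hZX.add hXc) hbound
    _ = (μ[X (n + 1)] - μ[X n]) / c (n + 1) + μ[X n] * (1 / c n - 1 / c (n + 1)) := by
        rw [integral_add hZX hXc, integral_div, integral_sub integrable_condExp (hX.integrable n),
          integral_mul_const, integral_condExp (ℱ.le n)]
    _ = _ := by ring

theorem MeasureTheory.Submartingale.summable_integral_abs_condExp_div_sub_div
    (hX : Submartingale X ℱ μ) (hX0 : ∀ n ω, 0 ≤ X n ω) (hc0 : ∀ n, 0 < c n) (hc : Monotone c)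
    (hbdd : BddAbove (Set.range fun n => μ[X n] / c n))
    (hsum : Summable fun n => μ[X n] * (1 / c n - 1 / c (n + 1))) :
    Summable fun n => ∫ ω, |μ[fun ω => X (n + 1) ω / c (n + 1) - X n ω / c n | ℱ n] ω| ∂μ := by
  obtain ⟨M, hM⟩ := hbdd
  have hnonneg : ∀ n, 0 ≤ μ[X n] * (1 / c n - 1 / c (n + 1)) := fun n =>
    mul_nonneg (integral_nonneg (hX0 n))
      (sub_nonneg.2 (one_div_le_one_div_of_le (hc0 n) (hc n.le_succ)))
  refine summable_of_sum_range_le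
    (c := M - μ[X 0] / c 0 + 2 * ∑' n, μ[X n] * (1 / c n - 1 / c (n + 1)))
    (fun n => integral_nonneg fun ω => abs_nonneg _) fun N => ?_
  calc _ ≤ ∑ n ∈ range N, ((μ[X (n + 1)] / c (n + 1) - μ[X n] / c n)
          + 2 * (μ[X n] * (1 / c n - 1 / c (n + 1)))) :=
        sum_le_sum fun n _ => hX.integral_abs_condExp_div_sub_div_le hX0 (hc0 n) (hc n.le_succ)
    _ = (μ[X N] / c N - μ[X 0] / c 0)
          + 2 * ∑ n ∈ range N, μ[X n] * (1 / c n - 1 / c (n + 1)) := by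
        rw [sum_add_distrib, sum_range_sub (fun n => μ[X n] / c n), mul_sum]
    _ ≤ _ := by
        gcongr
        · exact hM ⟨N, rfl⟩
        · exact hsum.sum_le_tsum _ fun n _ => hnonneg n

end Quasimartingale

theorem norm_partialSum_quasimartingale_general
    {B : Type*} [NormedAddCommGroup B] [NormedSpace ℝ B] [CompleteSpace B]
    [TopologicalSpace.SeparableSpace B] [MeasurableSpace B] [BorelSpace B]
    {Ω : Type*} [MeasurableSpace Ω] (μ : Measure Ω) [IsProbabilityMeasure μ]
    (p : ℝ) (hp1 : 1 < p)
    (Y : ℕ → Ω → B)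
    (hmeas : ∀ n, Measurable (Y n))
    (hint : ∀ n, Integrable (Y n) μ)
    (hmean : ∀ n, ∫ ω, Y n ω ∂μ = 0)
    (hindep : iIndepFun Y μ)
    (hsum : Summable fun n : ℕ =>
      (∫ ω, ‖partialSum Y (n + 1) ω‖ ∂μ) / ((n : ℝ) + 1) ^ (1 + 1 / p)) :
    Summable fun n : ℕ =>
      ∫ ω, |(μ[(fun ω => ‖partialSum Y (n + 2) ω‖ / ((n : ℝ) + 2) ^ (1 / p)
          - ‖partialSum Y (n + 1) ω‖ / ((n : ℝ) + 1) ^ (1 / p)) |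
          natFiltration Y (n + 1)]) ω| ∂μ := by
  have : SecondCountableTopology B := UniformSpace.secondCountable_of_separable B
  have hY : ∀ n, StronglyMeasurable (Y n) := fun n => (hmeas n).stronglyMeasurable
  have hX := (hindep.martingale_partialSum hY hint hmean).submartingale_norm
  have hq0 : 0 ≤ 1 / p := by positivity
  have hq1 : 1 / p ≤ 1 := (div_le_one (by linarith)).2 hp1.le
  set X : ℕ → Ω → ℝ := fun n ω => ‖partialSum Y (n + 1) ω‖
  set c : ℕ → ℝ := fun n => ((n : ℝ) + 1) ^ (1 / p)
  have hc_mono : Monotone c := fun m n hmn =>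
    Real.rpow_le_rpow (by positivity) (by gcongr) hq0
  have hc_succ : ∀ n : ℕ, c (n + 1) = ((n : ℝ) + 2) ^ (1 / p) := fun n => by
    simp only [c]; push_cast; ring_nf
  have hX_mono : Monotone fun n => μ[X n] := monotone_nat_of_le_succ fun n => by
    simpa using hX.setIntegral_le n.le_succ MeasurableSet.univ
  have hbdd : BddAbove (Set.range fun n => μ[X n] / c n) :=
    ⟨_, Set.forall_mem_range.2 (hX_mono.div_rpow_le_two_rpow_mul_tsum
      (fun n => integral_nonneg fun ω => norm_nonneg _) hq0 hsum)⟩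
  have hweights : Summable fun n => μ[X n] * (1 / c n - 1 / c (n + 1)) := by
    refine hsum.of_nonneg_of_le (fun n => mul_nonneg (integral_nonneg fun ω => norm_nonneg _)
      (sub_nonneg.2 (one_div_le_one_div_of_le (by positivity) (hc_mono n.le_succ))))
      fun n => ?_
    rw [hc_succ, ← mul_one_div (∫ ω, ‖partialSum Y (n + 1) ω‖ ∂μ)]
    gcongr
    simpa [c, add_assoc, one_add_one_eq_two] using
      one_div_rpow_sub_one_div_rpow_add_one_le (x := (n : ℝ) + 1) (by positivity) hq0 hq1
  refine (hX.summable_integral_abs_condExp_div_sub_div (fun n ω => norm_nonneg _)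
    (fun n => by positivity) hc_mono hbdd hweights).congr fun n => ?_
  rw [natFiltration_succ_eq_natural hY, hc_succ]

/-- For independent, integrable, mean-zero `B`-valued random variables
`(Y_n)` and `1 < p < 2`, if `∑_n E‖T_n‖ / n^{1+1/p} < ∞` then
`∑_n E|E(‖T_{n+1}‖/(n+1)^{1/p} − ‖T_n‖/n^{1/p} | G_n)| < ∞`, i.e. `(‖T_n‖/n^{1/p}, G_n)`
is a (nonnegative) real-valued quasimartingale. -/
theorem norm_partialSum_quasimartingale
    {B : Type*} [NormedAddCommGroup B] [NormedSpace ℝ B] [CompleteSpace B]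
    [TopologicalSpace.SeparableSpace B] [MeasurableSpace B] [BorelSpace B]
    {Ω : Type*} [MeasurableSpace Ω] (μ : Measure Ω) [IsProbabilityMeasure μ]
    (p : ℝ) (hp1 : 1 < p) (hp2 : p < 2)
    (Y : ℕ → Ω → B)
    (hmeas : ∀ n, Measurable (Y n))
    (hint : ∀ n, Integrable (Y n) μ)
    (hmean : ∀ n, ∫ ω, Y n ω ∂μ = 0)
    (hindep : iIndepFun Y μ)
    (hsum : Summable fun n : ℕ =>
      (∫ ω, ‖partialSum Y (n + 1) ω‖ ∂μ) / ((n : ℝ) + 1) ^ (1 + 1 / p)) :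
    Summable fun n : ℕ =>
      ∫ ω, |(μ[(fun ω => ‖partialSum Y (n + 2) ω‖ / ((n : ℝ) + 2) ^ (1 / p)
          - ‖partialSum Y (n + 1) ω‖ / ((n : ℝ) + 1) ^ (1 / p)) |
          natFiltration Y (n + 1)]) ω| ∂μ :=
  norm_partialSum_quasimartingale_general μ p hp1 Y hmeas hint hmean hindep hsum
end

section
/- Let 1 ≤ p ≤ 2 and let B be a real separable Banach space of Rademacher type p. Then there exists a constant c(p) > 0 such that for every finite sequence (X_1, …, X_n) of independent, mean-zero B-valued random variables with E‖X_i‖^p < ∞ for each i, one has E‖∑_{i=1}^n X_i‖^p ≤ c(p) ∑_{i=1}^n E‖X_i‖^p. -/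
open MeasureTheory ProbabilityTheory Finset

/-- A normed space `B` is of Rademacher type `p` if there is `c > 0` such that for every finite
sequence `(x_i)` in `B`, `(E‖∑ ε_i x_i‖^p)^{1/p} ≤ c (∑ ‖x_i‖^p)^{1/p}`, where the expectation
over the Rademacher signs is written as an average over all sign patterns. -/
def IsRademacherType (B : Type*) [NormedAddCommGroup B] (p : ℝ) : Prop :=
  ∃ c > 0, ∀ (n : ℕ) (x : Fin n → B),
    ((∑ ε : Fin n → Bool, ‖∑ i, (if ε i then x i else -x i)‖ ^ p) / 2 ^ n) ^ (1 / p)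
      ≤ c * (∑ i, ‖x i‖ ^ p) ^ (1 / p)

/-!
Symmetrization. If `X'` is an independent copy of `X = (X_i)`, Jensen's inequality in `X'`
(using `E X' = 0`) gives `E‖∑ X_i‖^p ≤ E‖∑ (X_i - X'_i)‖^p`. The differences `X_i - X'_i` are
independent and symmetric, so their joint law is invariant under every change of signs; averaging
over the `2^n` sign patterns and applying the type-`p` inequality pointwise bounds the right side
by `c^p ∑ E‖X_i - X'_i‖^p ≤ c^p 2^p ∑ E‖X_i‖^p`. By independence the joint law of `X` is the
product of its marginals, so all of this can be done on product measures.
-/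

open scoped ENNReal NNReal

lemma ENNReal.ofReal_norm_rpow {E : Type*} [NormedAddCommGroup E] {p : ℝ} (hp : 0 ≤ p) (x : E) :
    ENNReal.ofReal (‖x‖ ^ p) = ‖x‖ₑ ^ p := by
  rw [← ENNReal.ofReal_rpow_of_nonneg (norm_nonneg x) hp, ofReal_norm]

lemma IsRademacherType.exists_sum_enorm_rpow_le {B : Type*} [NormedAddCommGroup B] {p : ℝ}
    (hp : 0 < p) (hB : IsRademacherType B p) :
    ∃ C : ℝ≥0, 0 < C ∧ ∀ (n : ℕ) (x : Fin n → B),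
      ∑ ε : Fin n → Bool, ‖∑ i, (if ε i then x i else -x i)‖ₑ ^ p
        ≤ 2 ^ n * (C * ∑ i, ‖x i‖ₑ ^ p) := by
  obtain ⟨c, hc, hcx⟩ := hB
  refine ⟨(c ^ p).toNNReal, Real.toNNReal_pos.mpr (by positivity), fun n x => ?_⟩
  have hreal : ∑ ε : Fin n → Bool, ‖∑ i, (if ε i then x i else -x i)‖ ^ p
      ≤ 2 ^ n * (c ^ p * ∑ i, ‖x i‖ ^ p) := by
    have h := hcx n x
    rw [one_div, Real.rpow_inv_le_iff_of_pos (by positivity) (by positivity) hp,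
      Real.mul_rpow hc.le (by positivity), Real.rpow_inv_rpow (by positivity) hp.ne',
      div_le_iff₀ (by positivity)] at h
    linarith
  have := ENNReal.ofReal_le_ofReal hreal
  rw [ENNReal.ofReal_sum_of_nonneg fun _ _ => by positivity, ENNReal.ofReal_mul (by positivity),
    ENNReal.ofReal_mul (by positivity),
    ENNReal.ofReal_sum_of_nonneg fun _ _ => by positivity] at this
  simp only [ENNReal.ofReal_norm_rpow hp.le, ENNReal.ofReal_pow zero_le_two,
    ENNReal.ofReal_ofNat] at this
  exact this

lemma enorm_rpow_le_lintegral_enorm_sub_rpow {α E : Type*} [MeasurableSpace α]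
    [NormedAddCommGroup E] [NormedSpace ℝ E] [CompleteSpace E] {μ : Measure α}
    [IsProbabilityMeasure μ] {p : ℝ} (hp : 1 ≤ p) {g : α → E} (hg : Integrable g μ)
    (hg0 : ∫ a, g a ∂μ = 0) (x : E) :
    ‖x‖ₑ ^ p ≤ ∫⁻ a, ‖x - g a‖ₑ ^ p ∂μ := by
  have hp0 : 0 < p := zero_lt_one.trans_le hp
  have hx : x = ∫ a, (x - g a) ∂μ := by
    rw [integral_sub (integrable_const x) hg, hg0, integral_const, probReal_univ, one_smul,
      sub_zero]
  have hL1 : ‖x‖ₑ ≤ eLpNorm' (fun a => x - g a) p μ := by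
    calc ‖x‖ₑ ≤ eLpNorm' (fun a => x - g a) 1 μ := by
          conv_lhs => rw [hx]
          simpa [eLpNorm'] using enorm_integral_le_lintegral_enorm (μ := μ) fun a => x - g a
      _ ≤ eLpNorm' (fun a => x - g a) p μ :=
          eLpNorm'_le_eLpNorm'_of_exponent_le one_pos hp μ
            ((aestronglyMeasurable_const).sub hg.aestronglyMeasurable)
  calc ‖x‖ₑ ^ p ≤ eLpNorm' (fun a => x - g a) p μ ^ p := ENNReal.rpow_le_rpow hL1 hp0.le
    _ = ∫⁻ a, ‖x - g a‖ₑ ^ p ∂μ := by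
      rw [eLpNorm', ← ENNReal.rpow_mul, one_div_mul_cancel hp0.ne', ENNReal.rpow_one]

lemma lintegral_enorm_sum_rpow_le_of_measurePreserving_signs {n : ℕ} {B : Type*}
    [NormedAddCommGroup B] [MeasurableSpace B] [BorelSpace B] [SecondCountableTopology B]
    {p : ℝ} {C : ℝ≥0∞}
    (hC : ∀ x : Fin n → B, ∑ ε : Fin n → Bool, ‖∑ i, (if ε i then x i else -x i)‖ₑ ^ p
      ≤ 2 ^ n * (C * ∑ i, ‖x i‖ₑ ^ p))
    {ρ : Measure (Fin n → B)}
    (hρ : ∀ ε : Fin n → Bool, MeasurePreserving (fun x i => if ε i then x i else -x i) ρ ρ) :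
    ∫⁻ x, ‖∑ i, x i‖ₑ ^ p ∂ρ ≤ C * ∑ i, ∫⁻ x, ‖x i‖ₑ ^ p ∂ρ := by
  have hF : Measurable fun x : Fin n → B => ‖∑ i, x i‖ₑ ^ p := by fun_prop
  have hsigned : ∀ ε : Fin n → Bool, ∫⁻ x, ‖∑ i, x i‖ₑ ^ p ∂ρ
      = ∫⁻ x, ‖∑ i, (if ε i then x i else -x i)‖ₑ ^ p ∂ρ := fun ε =>
    ((hρ ε).lintegral_comp hF).symm
  refine (ENNReal.mul_le_mul_iff_right (a := 2 ^ n) (by positivity) (by simp)).mp ?_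
  calc 2 ^ n * ∫⁻ x, ‖∑ i, x i‖ₑ ^ p ∂ρ
      = ∑ ε : Fin n → Bool, ∫⁻ x, ‖∑ i, (if ε i then x i else -x i)‖ₑ ^ p ∂ρ := by
        simp [← hsigned, Finset.sum_const, Finset.card_univ]
    _ = ∫⁻ x, ∑ ε : Fin n → Bool, ‖∑ i, (if ε i then x i else -x i)‖ₑ ^ p ∂ρ :=
        (lintegral_finsetSum _ fun ε _ => hF.comp (hρ ε).measurable).symm
    _ ≤ ∫⁻ x, 2 ^ n * (C * ∑ i, ‖x i‖ₑ ^ p) ∂ρ := lintegral_mono hC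
    _ = 2 ^ n * (C * ∑ i, ∫⁻ x, ‖x i‖ₑ ^ p ∂ρ) := by
        rw [lintegral_const_mul _ (by fun_prop), lintegral_const_mul _ (by fun_prop),
          lintegral_finsetSum _ fun i _ => by fun_prop]

namespace MeasureTheory.Measure

variable {B : Type*} [NormedAddCommGroup B] [MeasurableSpace B] [BorelSpace B]
  [SecondCountableTopology B]

noncomputable def symmetrization (ν : Measure B) : Measure B :=
  (ν.prod ν).map fun z => z.1 - z.2

instance (ν : Measure B) [IsProbabilityMeasure ν] : IsProbabilityMeasure ν.symmetrization :=
  isProbabilityMeasure_map (by fun_prop)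

lemma measurePreserving_neg_symmetrization (ν : Measure B) [SFinite ν] :
    MeasurePreserving Neg.neg ν.symmetrization ν.symmetrization := by
  refine ⟨measurable_neg, ?_⟩
  calc ν.symmetrization.map Neg.neg
      = (ν.prod ν).map ((fun z : B × B => z.1 - z.2) ∘ Prod.swap) := by
        rw [symmetrization, map_map (by fun_prop) (by fun_prop)]
        congr 1; ext z; simp
    _ = ν.symmetrization := by
        rw [← map_map (by fun_prop) measurable_swap, prod_swap]
        rfl

lemma lintegral_enorm_rpow_symmetrization_le (ν : Measure B) [IsProbabilityMeasure ν]
    {p : ℝ} (hp : 1 ≤ p) :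
    ∫⁻ b, ‖b‖ₑ ^ p ∂ν.symmetrization ≤ 2 ^ p * ∫⁻ b, ‖b‖ₑ ^ p ∂ν := by
  have hp0 : 0 ≤ p := zero_le_one.trans hp
  have hF : Measurable fun b : B => ‖b‖ₑ ^ p := by fun_prop
  calc ∫⁻ b, ‖b‖ₑ ^ p ∂ν.symmetrization = ∫⁻ z, ‖z.1 - z.2‖ₑ ^ p ∂(ν.prod ν) :=
        lintegral_map hF (by fun_prop)
    _ ≤ ∫⁻ z, 2 ^ (p - 1) * (‖z.1‖ₑ ^ p + ‖z.2‖ₑ ^ p) ∂(ν.prod ν) := by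
        refine lintegral_mono fun z => ?_
        calc ‖z.1 - z.2‖ₑ ^ p ≤ (‖z.1‖ₑ + ‖z.2‖ₑ) ^ p :=
              ENNReal.rpow_le_rpow enorm_sub_le hp0
          _ ≤ _ := ENNReal.rpow_add_le_mul_rpow_add_rpow _ _ hp
    _ = 2 ^ (p - 1) * (2 * ∫⁻ b, ‖b‖ₑ ^ p ∂ν) := by
        rw [lintegral_const_mul _ (by fun_prop), lintegral_add_left (by fun_prop),
          measurePreserving_fst.lintegral_comp hF, measurePreserving_snd.lintegral_comp hF,
          two_mul]
    _ = 2 ^ p * ∫⁻ b, ‖b‖ₑ ^ p ∂ν := by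
        rw [← mul_assoc, ENNReal.rpow_sub _ _ two_ne_zero ENNReal.ofNat_ne_top,
          ENNReal.rpow_one, ENNReal.div_mul_cancel two_ne_zero ENNReal.ofNat_ne_top]

lemma pi_symmetrization {ι : Type*} [Fintype ι] (ν : ι → Measure B)
    [∀ i, IsProbabilityMeasure (ν i)] :
    Measure.pi (fun i => (ν i).symmetrization)
      = ((Measure.pi ν).prod (Measure.pi ν)).map fun xy => xy.1 - xy.2 := by
  have hsub : MeasurePreserving (fun (q : ι → B × B) i => (q i).1 - (q i).2)
      (Measure.pi fun i => (ν i).prod (ν i)) (Measure.pi fun i => (ν i).symmetrization) :=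
    measurePreserving_pi _ _ (f := fun (_ : ι) (z : B × B) => z.1 - z.2) fun _ =>
      ⟨by fun_prop, rfl⟩
  rw [← hsub.map_eq, ← (measurePreserving_arrowProdEquivProdArrow B B ι ν ν).map_eq,
    map_map (by fun_prop) (MeasurableEquiv.measurable _)]
  rfl

end MeasureTheory.Measure

section

variable {B : Type*} [NormedAddCommGroup B] [NormedSpace ℝ B] [CompleteSpace B]
  [MeasurableSpace B] [BorelSpace B] [SecondCountableTopology B] {p : ℝ}

lemma lintegral_enorm_sum_rpow_le_pi_symmetrization {ι : Type*} [Fintype ι] (hp : 1 ≤ p)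
    (ν : ι → Measure B) [∀ i, IsProbabilityMeasure (ν i)] (hint : ∀ i, Integrable id (ν i))
    (hmean : ∀ i, ∫ b, b ∂ν i = 0) :
    ∫⁻ x, ‖∑ i, x i‖ₑ ^ p ∂Measure.pi ν
      ≤ ∫⁻ x, ‖∑ i, x i‖ₑ ^ p ∂Measure.pi fun i => (ν i).symmetrization := by
  have hF : Measurable fun x : ι → B => ‖∑ i, x i‖ₑ ^ p := by fun_prop
  have hsum : Integrable (fun y : ι → B => ∑ i, y i) (Measure.pi ν) :=
    integrable_finsetSum _ fun i _ => integrable_eval (hint i)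
  have hsum0 : ∫ y, ∑ i, y i ∂Measure.pi ν = 0 := by
    rw [integral_finsetSum (f := fun i (y : ι → B) => y i) _ fun i _ => integrable_eval (hint i)]
    simp [integral_eval, hmean]
  rw [Measure.pi_symmetrization, lintegral_map hF (by fun_prop),
    lintegral_prod _ (by fun_prop)]
  refine lintegral_mono fun x => ?_
  simpa [Finset.sum_sub_distrib] using
    enorm_rpow_le_lintegral_enorm_sub_rpow hp hsum hsum0 (∑ i, x i)

theorem lintegral_enorm_sum_rpow_le_pi {n : ℕ} (hp : 1 ≤ p) {C : ℝ≥0∞}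
    (hC : ∀ x : Fin n → B, ∑ ε : Fin n → Bool, ‖∑ i, (if ε i then x i else -x i)‖ₑ ^ p
      ≤ 2 ^ n * (C * ∑ i, ‖x i‖ₑ ^ p))
    (ν : Fin n → Measure B) [∀ i, IsProbabilityMeasure (ν i)] (hint : ∀ i, Integrable id (ν i))
    (hmean : ∀ i, ∫ b, b ∂ν i = 0) :
    ∫⁻ x, ‖∑ i, x i‖ₑ ^ p ∂Measure.pi ν ≤ C * 2 ^ p * ∑ i, ∫⁻ b, ‖b‖ₑ ^ p ∂ν i := by
  set ρ := Measure.pi fun i => (ν i).symmetrization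
  have hsigns (ε : Fin n → Bool) :
      MeasurePreserving (fun x i => if ε i then x i else -x i) ρ ρ := by
    refine measurePreserving_pi _ _ (f := fun i (b : B) => if ε i then b else -b) fun i => ?_
    cases ε i
    · exact Measure.measurePreserving_neg_symmetrization (ν i)
    · exact MeasurePreserving.id _
  calc ∫⁻ x, ‖∑ i, x i‖ₑ ^ p ∂Measure.pi ν ≤ ∫⁻ x, ‖∑ i, x i‖ₑ ^ p ∂ρ :=
        lintegral_enorm_sum_rpow_le_pi_symmetrization hp ν hint hmean
    _ ≤ C * ∑ i, ∫⁻ x, ‖x i‖ₑ ^ p ∂ρ :=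
        lintegral_enorm_sum_rpow_le_of_measurePreserving_signs hC hsigns
    _ = C * ∑ i, ∫⁻ b, ‖b‖ₑ ^ p ∂(ν i).symmetrization := by
        congr 1
        exact Finset.sum_congr rfl fun i _ =>
          (measurePreserving_eval _ i).lintegral_comp (f := fun b => ‖b‖ₑ ^ p) (by fun_prop)
    _ ≤ C * ∑ i, 2 ^ p * ∫⁻ b, ‖b‖ₑ ^ p ∂ν i := by
        gcongr with i
        exact Measure.lintegral_enorm_rpow_symmetrization_le (ν i) hp
    _ = C * 2 ^ p * ∑ i, ∫⁻ b, ‖b‖ₑ ^ p ∂ν i := by rw [← Finset.mul_sum, mul_assoc]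

theorem lintegral_enorm_sum_rpow_le_of_iIndepFun {Ω : Type*} [MeasurableSpace Ω]
    {μ : Measure Ω} [IsProbabilityMeasure μ] {n : ℕ} (hp : 1 ≤ p) {C : ℝ≥0∞}
    (hC : ∀ x : Fin n → B, ∑ ε : Fin n → Bool, ‖∑ i, (if ε i then x i else -x i)‖ₑ ^ p
      ≤ 2 ^ n * (C * ∑ i, ‖x i‖ₑ ^ p))
    {X : Fin n → Ω → B} (hint : ∀ i, Integrable (X i) μ) (hmean : ∀ i, ∫ ω, X i ω ∂μ = 0)
    (hind : iIndepFun X μ) :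
    ∫⁻ ω, ‖∑ i, X i ω‖ₑ ^ p ∂μ ≤ C * 2 ^ p * ∑ i, ∫⁻ ω, ‖X i ω‖ₑ ^ p ∂μ := by
  have hX : ∀ i, AEMeasurable (X i) μ := fun i => (hint i).aemeasurable
  have hlaw := hind.map_fun_eq_pi_map hX
  have (i : Fin n) : IsProbabilityMeasure (μ.map (X i)) :=
    Measure.isProbabilityMeasure_map (hX i)
  have hlintegral (i : Fin n) : ∫⁻ ω, ‖X i ω‖ₑ ^ p ∂μ = ∫⁻ b, ‖b‖ₑ ^ p ∂μ.map (X i) :=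
    (lintegral_map' (f := fun b => ‖b‖ₑ ^ p) (by fun_prop) (hX i)).symm
  calc ∫⁻ ω, ‖∑ i, X i ω‖ₑ ^ p ∂μ = ∫⁻ x, ‖∑ i, x i‖ₑ ^ p ∂μ.map fun ω i => X i ω :=
        (lintegral_map' (f := fun x : Fin n → B => ‖∑ i, x i‖ₑ ^ p) (by fun_prop)
          (aemeasurable_pi_iff.mpr hX)).symm
    _ ≤ C * 2 ^ p * ∑ i, ∫⁻ b, ‖b‖ₑ ^ p ∂μ.map (X i) := by
        rw [hlaw]
        refine lintegral_enorm_sum_rpow_le_pi hp hC _ (fun i => ?_) fun i => ?_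
        · exact (integrable_map_measure aestronglyMeasurable_id (hX i)).mpr (hint i)
        · rw [integral_map (f := fun b => b) (hX i) aestronglyMeasurable_id]; exact hmean i
    _ = C * 2 ^ p * ∑ i, ∫⁻ ω, ‖X i ω‖ₑ ^ p ∂μ := by simp only [hlintegral]

end

theorem rademacher_type_moment_inequality_general
    {B : Type*} [NormedAddCommGroup B] [NormedSpace ℝ B] [CompleteSpace B]
    [TopologicalSpace.SeparableSpace B] [MeasurableSpace B] [BorelSpace B]
    (p : ℝ) (hp1 : 1 ≤ p)
    (hB : IsRademacherType B p) :
    ∃ c > (0 : ℝ), ∀ (Ω : Type) (_ : MeasurableSpace Ω) (μ : Measure Ω),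
      IsProbabilityMeasure μ →
      ∀ (n : ℕ) (X : Fin n → Ω → B),
        (∀ i, Measurable (X i)) →
        (∀ i, MemLp (X i) (ENNReal.ofReal p) μ) →
        (∀ i, ∫ ω, X i ω ∂μ = 0) →
        iIndepFun X μ →
        ∫ ω, ‖∑ i, X i ω‖ ^ p ∂μ ≤ c * ∑ i, ∫ ω, ‖X i ω‖ ^ p ∂μ := by
  have hp0 : 0 < p := zero_lt_one.trans_le hp1
  have : SecondCountableTopology B := UniformSpace.secondCountable_of_separable B
  obtain ⟨C, hC0, hC⟩ := hB.exists_sum_enorm_rpow_le hp0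
  refine ⟨C * 2 ^ p, by positivity, fun Ω _ μ _ n X _ hXp hmean hind => ?_⟩
  have hint (i : Fin n) : Integrable (X i) μ :=
    (hXp i).integrable (ENNReal.one_le_ofReal.mpr hp1)
  have hmoment (i : Fin n) :
      ENNReal.ofReal (∫ ω, ‖X i ω‖ ^ p ∂μ) = ∫⁻ ω, ‖X i ω‖ₑ ^ p ∂μ := by
    rw [ofReal_integral_eq_lintegral_ofReal
      (by simpa [hp0.le] using (hXp i).integrable_norm_rpow') (ae_of_all _ fun ω => by positivity)]
    simp only [ENNReal.ofReal_norm_rpow hp0.le]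
  rw [integral_eq_lintegral_of_nonneg_ae (ae_of_all _ fun ω => by positivity)
    (by fun_prop (disch := linarith))]
  refine ENNReal.toReal_le_of_le_ofReal (by positivity) ?_
  calc ∫⁻ ω, ENNReal.ofReal (‖∑ i, X i ω‖ ^ p) ∂μ = ∫⁻ ω, ‖∑ i, X i ω‖ₑ ^ p ∂μ := by
        simp only [ENNReal.ofReal_norm_rpow hp0.le]
    _ ≤ C * 2 ^ p * ∑ i, ∫⁻ ω, ‖X i ω‖ₑ ^ p ∂μ :=
        lintegral_enorm_sum_rpow_le_of_iIndepFun hp1 (hC n) hint hmean hind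
    _ = ENNReal.ofReal (C * 2 ^ p * ∑ i, ∫ ω, ‖X i ω‖ ^ p ∂μ) := by
        rw [ENNReal.ofReal_mul (by positivity), ENNReal.ofReal_sum_of_nonneg
          fun i _ => integral_nonneg fun ω => by positivity]
        simp [hmoment, ← ENNReal.ofReal_rpow_of_pos (two_pos : (0 : ℝ) < 2)]

/-- If `1 ≤ p ≤ 2` and `B` is a real separable Banach space of Rademacher
type `p`, then there is a constant `c(p) > 0` such that for every finite sequence
`(X_1,…,X_n)` of independent mean-zero `B`-valued random variables with `E‖X_i‖^p < ∞`,
`E‖∑ X_i‖^p ≤ c(p) ∑ E‖X_i‖^p`. -/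
theorem rademacher_type_moment_inequality
    {B : Type*} [NormedAddCommGroup B] [NormedSpace ℝ B] [CompleteSpace B]
    [TopologicalSpace.SeparableSpace B] [MeasurableSpace B] [BorelSpace B]
    (p : ℝ) (hp1 : 1 ≤ p) (hp2 : p ≤ 2)
    (hB : IsRademacherType B p) :
    ∃ c > (0 : ℝ), ∀ (Ω : Type) (_ : MeasurableSpace Ω) (μ : Measure Ω),
      IsProbabilityMeasure μ →
      ∀ (n : ℕ) (X : Fin n → Ω → B),
        (∀ i, Measurable (X i)) →
        (∀ i, MemLp (X i) (ENNReal.ofReal p) μ) →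
        (∀ i, ∫ ω, X i ω ∂μ = 0) →
        iIndepFun X μ →
        ∫ ω, ‖∑ i, X i ω‖ ^ p ∂μ ≤ c * ∑ i, ∫ ω, ‖X i ω‖ ^ p ∂μ :=
  rademacher_type_moment_inequality_general p hp1 hB
end
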